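/- arXiv:1502.05614 — 10 statements merged into one kernel-verified Lean document; each statement's English description precedes it below -/
import Mathlib

section
/- For all positive integers n and m with n ≤ m, ⌊n/2⌋ + 1 hunters have a winning strategy on the (n×m)-grid; that is, the hunter number of the (n×m)-grid is at most ⌊n/2⌋ + 1. -/
/-!
The hunters sweep the grid in row-major order. Rank the cells row by row from `0` to `n * m - 1`;
at time `t` the hunters shoot those cells of rank `t, …, t + n` whose chessboard colour is the one
the rabbit has at time `t` if it started on a fixed colour. Since the rabbit changes colour every
round and one step lowers the rank by at most `n`, such a rabbit can never slip past the window: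
while it is alive its rank is at least `t`, which is impossible at time `n * m`. A second sweep
catches the rabbits of the other colour. A window of `n + 1` consecutive cells spans at most two
rows, `x - y` is injective on it and `x + y` has fixed parity on one colour class, so at most
`⌊n/2⌋ + 1` cells are shot per round.
-/

/-- A rabbit's strategy on `G`: `r i` is the rabbit's position after the `i`-th shot
(`r 0` is the initial position); the rabbit always moves along an edge. -/
def RabbitStrategy {V : Type*} (G : SimpleGraph V) (r : ℕ → V) : Prop :=
  ∀ i : ℕ, G.Adj (r i) (r (i + 1))

/-- `k` hunters have a winning strategy on `G` with respect to `S`: there is a sequence of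
shots `Hs` (where `Hs i` is the set `H_{i+1}` of vertices shot in round `i + 1`), each of
size at most `k`, such that every rabbit starting in `S` is eventually shot
(`r i ∈ Hs i` expresses the paper's condition `r_{i-1} ∈ H_i` for some `i ≥ 1`). -/
def HuntersWinWrt {V : Type*} (G : SimpleGraph V) (k : ℕ) (S : Set V) : Prop :=
  ∃ Hs : ℕ → Finset V, (∀ i, (Hs i).card ≤ k) ∧
    ∀ r : ℕ → V, RabbitStrategy G r → r 0 ∈ S → ∃ i, r i ∈ Hs i

/-- `k` hunters have a winning strategy on `G`. -/
def HuntersWin {V : Type*} (G : SimpleGraph V) (k : ℕ) : Prop :=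
  HuntersWinWrt G k Set.univ

/-- The hunter number `h(G)`: the minimum number of hunters having a winning strategy. -/
noncomputable def hunterNumber {V : Type*} (G : SimpleGraph V) : ℕ :=
  sInf {k | HuntersWin G k}

/-- Vertices of the (n × m)-grid: pairs (x, y) with 1 ≤ x ≤ n and 1 ≤ y ≤ m. -/
abbrev GridV (n m : ℕ) := {p : ℕ × ℕ // 1 ≤ p.1 ∧ p.1 ≤ n ∧ 1 ≤ p.2 ∧ p.2 ≤ m}

/-- The (n × m)-grid graph: (x,y) and (x',y') are adjacent iff |x-x'| + |y-y'| = 1. -/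
def gridGraph (n m : ℕ) : SimpleGraph (GridV n m) where
  Adj u v := |(u.val.1 : ℤ) - v.val.1| + |(u.val.2 : ℤ) - v.val.2| = 1
  symm := by
    constructor
    intro u v h
    rw [abs_sub_comm (u.val.1 : ℤ) (v.val.1 : ℤ), abs_sub_comm (u.val.2 : ℤ) (v.val.2 : ℤ)] at h
    exact h
  loopless := by
    constructor
    intro u h
    simp at h

instance (n m : ℕ) : Fintype (GridV n m) :=
  Fintype.subtype (Finset.Icc 1 n ×ˢ Finset.Icc 1 m) (by simp [and_assoc])

theorem Nat.div_cases_of_le_mul_add_le {n t q r : ℕ} (hr : r < n) (hlow : t ≤ n * q + r)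
    (hhigh : n * q + r ≤ t + n) :
    (q = t / n ∧ t % n ≤ r) ∨ (q = t / n + 1 ∧ r ≤ t % n) := by
  have hn : 0 < n := by omega
  have hdiv : (n * q + r) / n = q := by
    rw [Nat.add_comm, Nat.add_mul_div_left _ _ hn, Nat.div_eq_of_lt hr, Nat.zero_add]
  have hq_low : t / n ≤ q := hdiv ▸ Nat.div_le_div_right hlow
  have hq_high : q ≤ t / n + 1 := by
    simpa [hdiv, Nat.add_div_right _ hn] using Nat.div_le_div_right (c := n) hhigh
  have ht := Nat.div_add_mod t n
  rcases Nat.eq_or_lt_of_le hq_high with rfl | hlt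
  · rw [Nat.mul_add] at hhigh
    omega
  · obtain rfl : q = t / n := by omega
    omega

namespace gridGraph

variable {n m : ℕ}

def rank (v : GridV n m) : ℕ := n * (v.val.2 - 1) + (v.val.1 - 1)

theorem rank_lt (v : GridV n m) : rank v < n * m := by
  obtain ⟨hx1, hxn, hy1, hym⟩ := v.2
  calc rank v < n * (v.val.2 - 1) + n := by unfold rank; omega
    _ = n * v.val.2 := by rw [← Nat.mul_succ]; congr 1; omega
    _ ≤ n * m := Nat.mul_le_mul_left n hym

theorem coords_of_adj {u v : GridV n m} (h : (gridGraph n m).Adj u v) :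
    (u.val.1 = v.val.1 ∧ (u.val.2 + 1 = v.val.2 ∨ v.val.2 + 1 = u.val.2)) ∨
    (u.val.2 = v.val.2 ∧ (u.val.1 + 1 = v.val.1 ∨ v.val.1 + 1 = u.val.1)) := by
  have h' : |(u.val.1 : ℤ) - v.val.1| + |(u.val.2 : ℤ) - v.val.2| = 1 := h
  rcases abs_cases ((u.val.1 : ℤ) - v.val.1) with ⟨e1, _⟩ | ⟨e1, _⟩ <;>
    rcases abs_cases ((u.val.2 : ℤ) - v.val.2) with ⟨e2, _⟩ | ⟨e2, _⟩ <;>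
      rw [e1, e2] at h' <;> omega

theorem rank_le_add_of_adj {u v : GridV n m} (h : (gridGraph n m).Adj u v) :
    rank u ≤ rank v + n := by
  obtain ⟨hux, -, huy, -⟩ := u.2
  obtain ⟨hvx, -, hvy, -⟩ := v.2
  unfold rank
  rcases coords_of_adj h with ⟨hx, hy | hy⟩ | ⟨hy, hx | hx⟩
  · have : n * (u.val.2 - 1) ≤ n * (v.val.2 - 1) := Nat.mul_le_mul_left n (by omega)
    omega
  · have : n * (u.val.2 - 1) = n * (v.val.2 - 1) + n := by rw [← Nat.mul_succ]; congr 1; omega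
    omega
  all_goals rw [hy]; omega

theorem coord_sum_add_mod_two {r : ℕ → GridV n m} (hr : RabbitStrategy (gridGraph n m) r)
    (t : ℕ) : ((r t).val.1 + (r t).val.2 + t) % 2 = ((r 0).val.1 + (r 0).val.2) % 2 := by
  induction t with
  | zero => rfl
  | succ t ih =>
    have := coords_of_adj (hr t)
    omega

def sweepShots (n m t c : ℕ) : Finset (GridV n m) :=
  Finset.univ.filter fun v => t ≤ rank v ∧ rank v ≤ t + n ∧ (v.val.1 + v.val.2 + c) % 2 = 0

theorem mem_sweepShots {t c : ℕ} {v : GridV n m} :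
    v ∈ sweepShots n m t c ↔ t ≤ rank v ∧ rank v ≤ t + n ∧ (v.val.1 + v.val.2 + c) % 2 = 0 := by
  simp [sweepShots]

theorem rows_of_mem_sweepShots {t c : ℕ} {v : GridV n m} (hv : v ∈ sweepShots n m t c) :
    ((v.val.2 = t / n + 1 ∧ t % n + 1 ≤ v.val.1) ∨ (v.val.2 = t / n + 2 ∧ v.val.1 ≤ t % n + 1)) ∧
      (v.val.1 + v.val.2 + c) % 2 = 0 := by
  obtain ⟨hx1, hxn, hy1, -⟩ := v.2
  obtain ⟨hlow, hhigh, hpar⟩ := mem_sweepShots.mp hv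
  refine ⟨?_, hpar⟩
  rcases Nat.div_cases_of_le_mul_add_le (r := v.val.1 - 1) (by omega) hlow hhigh with
    ⟨hy, hx⟩ | ⟨hy, hx⟩ <;> omega

theorem card_sweepShots_le (t c : ℕ) : (sweepShots n m t c).card ≤ n / 2 + 1 := by
  -- `x + t / n + 1 - y` runs through `0, …, n` along the window, with fixed parity on `sweepShots`
  calc (sweepShots n m t c).card
      ≤ (Finset.range (n / 2 + 1)).card := by
        refine Finset.card_le_card_of_injOn (fun v => (v.val.1 + t / n + 1 - v.val.2) / 2) ?_ ?_
        · intro v hv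
          have := rows_of_mem_sweepShots hv
          obtain ⟨-, hxn, -, -⟩ := v.2
          simp only [Finset.coe_range, Set.mem_Iio]
          omega
        · intro v hv w hw hvw
          have := rows_of_mem_sweepShots hv
          have := rows_of_mem_sweepShots hw
          simp only at hvw
          exact Subtype.ext (Prod.ext (by omega) (by omega))
    _ = n / 2 + 1 := Finset.card_range _

theorem exists_mem_sweepShots {r : ℕ → GridV n m} (hr : RabbitStrategy (gridGraph n m) r)
    (c : ℕ) (hc : ((r 0).val.1 + (r 0).val.2 + c) % 2 = 0) :
    ∃ t < n * m, r t ∈ sweepShots n m t (t + c) := by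
  by_contra! hmiss
  have behind : ∀ t ≤ n * m, t ≤ rank (r t) := by
    intro t
    induction t with
    | zero => exact fun _ => Nat.zero_le _
    | succ t ih =>
      intro ht
      have hlow := ih (by omega)
      have hpar := coord_sum_add_mod_two hr t
      have hstep := rank_le_add_of_adj (hr t)
      have hout := hmiss t (by omega)
      rw [mem_sweepShots] at hout
      omega
  exact absurd (behind (n * m) le_rfl) (Nat.not_le.mpr (rank_lt _))

end gridGraph

open gridGraph in
theorem hunterNumber_grid_upper_general (n m : ℕ) :
    HuntersWin (gridGraph n m) (n / 2 + 1) ∧ hunterNumber (gridGraph n m) ≤ n / 2 + 1 := by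
  have hwin : HuntersWin (gridGraph n m) (n / 2 + 1) := by
    refine ⟨fun t => if t < n * m then sweepShots n m t t
        else sweepShots n m (t - n * m) (t + 1),
      fun t => by dsimp only; split_ifs <;> exact card_sweepShots_le _ _, fun r hr _ => ?_⟩
    by_cases heven : ((r 0).val.1 + (r 0).val.2) % 2 = 0
    · obtain ⟨t, ht, hmem⟩ := exists_mem_sweepShots hr 0 heven
      exact ⟨t, by simpa [ht] using hmem⟩
    · have hodd : ((r (n * m)).val.1 + (r (n * m)).val.2 + (n * m + 1)) % 2 = 0 := by
        have := coord_sum_add_mod_two hr (n * m)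
        omega
      obtain ⟨t, ht, hmem⟩ :=
        exists_mem_sweepShots (r := fun s => r (n * m + s)) (fun s => hr (n * m + s)) _ hodd
      refine ⟨n * m + t, ?_⟩
      simp only [Nat.not_lt.mpr (Nat.le_add_right _ t), if_false, Nat.add_sub_cancel_left]
      rwa [show n * m + t + 1 = t + (n * m + 1) by omega]
  exact ⟨hwin, Nat.sInf_le hwin⟩

/-- For all positive integers n ≤ m, ⌊n/2⌋ + 1 hunters have a winning strategy on the
(n×m)-grid; that is, the hunter number of the (n×m)-grid is at most ⌊n/2⌋ + 1. -/
theorem hunterNumber_grid_upper (n m : ℕ) (hn : 1 ≤ n) (hnm : n ≤ m) :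
    HuntersWin (gridGraph n m) (n / 2 + 1) ∧ hunterNumber (gridGraph n m) ≤ n / 2 + 1 :=
  hunterNumber_grid_upper_general n m
end

section
/- Let G be the (n×n)-grid. If Q' is obtained from Q ⊆ V_1 by the down-right shifting, or by the down-left shifting, then δ(Q') ≤ δ(Q). -/
/-
Q lies in one parity class, so N(Q) ∩ Uᵢ is empty when i has the parity of Q, and otherwise
consists of the vertices of Uᵢ adjacent to Q ∩ Uᵢ₋₁ or to Q ∩ Uᵢ₊₁. Measured by the
y-coordinate, a vertex y of Uᵢ is adjacent to the vertices y and y - 1 of Uᵢ₋₁ and to y and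
y + 1 of Uᵢ₊₁, so these two parts are an "upper" and a "lower" shadow of the y-sets of
Q ∩ Uᵢ₋₁ and Q ∩ Uᵢ₊₁, cut to the y-range of Uᵢ (which differs from those of Uᵢ₋₁ and Uᵢ₊₁ by
one at one end). For initial segments both shadows are initial segments of that range, hence
nested, and each is no larger than the shadow of any set of the same size; so the shifting
does not increase |N ∩ Uᵢ| for any i.

The reflection x ↦ n + 1 - x is a grid automorphism mapping each Wᵢ onto Uₙ₊₁₋ᵢ and
preserving y, so it turns the down-left shifting into the down-right shifting of the parity
class of n + 1.
-/

/-- Vertices of the (n × n)-grid, as pairs of integers in {1, ..., n}. -/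
def gridSet (n : ℕ) : Finset (ℕ × ℕ) := Finset.Icc 1 n ×ˢ Finset.Icc 1 n

/-- Grid adjacency: (x,y) ~ (x',y') iff |x-x'| + |y-y'| = 1. -/
def gridAdj (p q : ℕ × ℕ) : Prop :=
  |(p.1 : ℤ) - q.1| + |(p.2 : ℤ) - q.2| = 1

instance (p q : ℕ × ℕ) : Decidable (gridAdj p q) := by unfold gridAdj; infer_instance

/-- V₁: the grid vertices (x, y) with x + y even. -/
def V1 (n : ℕ) : Finset (ℕ × ℕ) := (gridSet n).filter (fun p => Even (p.1 + p.2))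

/-- N(S): the set of grid vertices outside S that are adjacent to some vertex of S. -/
def gridNbr (n : ℕ) (S : Finset (ℕ × ℕ)) : Finset (ℕ × ℕ) :=
  (gridSet n).filter (fun q => q ∉ S ∧ ∃ p ∈ S, gridAdj p q)

/-- δ(S) = |N(S)|. -/
def deltaN (n : ℕ) (S : Finset (ℕ × ℕ)) : ℕ := (gridNbr n S).card

/-- Uᵢ = {(x,y) in the grid : x + y = i}, whose vertices are ordered by increasing y. -/
def Ui (n i : ℕ) : Finset (ℕ × ℕ) := (gridSet n).filter (fun p => p.1 + p.2 = i)

/-- Wᵢ = {(x,y) in the grid : x - y = i}, whose vertices are ordered by increasing y. -/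
def Wi (n : ℕ) (i : ℤ) : Finset (ℕ × ℕ) := (gridSet n).filter (fun p => (p.1 : ℤ) - p.2 = i)

/-- The down-right shifting of Q ⊆ V₁: on each diagonal Uᵢ, the r = |Uᵢ ∩ Q| vertices of
Uᵢ ∩ Q are replaced by the first r vertices u₁ⁱ, ..., u_rⁱ of Uᵢ (by increasing y).
A vertex v of V₁ belongs to the shifted set iff its rank on its diagonal is at most r. -/
def downRightShift (n : ℕ) (Q : Finset (ℕ × ℕ)) : Finset (ℕ × ℕ) :=
  (gridSet n).filter (fun v => Even (v.1 + v.2) ∧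
    ((Ui n (v.1 + v.2)).filter (fun u => u.2 ≤ v.2)).card ≤ (Q ∩ Ui n (v.1 + v.2)).card)

/-- The down-left shifting of Q ⊆ V₁: on each diagonal Wᵢ, the r = |Wᵢ ∩ Q| vertices of
Wᵢ ∩ Q are replaced by the first r vertices w₁ⁱ, ..., w_rⁱ of Wᵢ (by increasing y). -/
def downLeftShift (n : ℕ) (Q : Finset (ℕ × ℕ)) : Finset (ℕ × ℕ) :=
  (gridSet n).filter (fun v => Even (v.1 + v.2) ∧
    ((Wi n ((v.1 : ℤ) - v.2)).filter (fun u => u.2 ≤ v.2)).card ≤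
      (Q ∩ Wi n ((v.1 : ℤ) - v.2)).card)

open Finset

section Shadow

variable {A : Finset ℕ} {a b a' b' : ℕ}

def lowerShadow (W A : Finset ℕ) : Finset ℕ := W.filter (fun y => y ∈ A ∨ y + 1 ∈ A)

-- Used only for windows `W` of positive integers, where `y - 1` does not truncate.
def upperShadow (W A : Finset ℕ) : Finset ℕ := W.filter (fun y => y ∈ A ∨ y - 1 ∈ A)

lemma card_add_one_le_card_lowerShadow (hA : A ⊆ Icc (a + 1) b) (hne : A.Nonempty) :
    #A + 1 ≤ #(lowerShadow (Icc a b) A) := by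
  have hmin := hA (A.min'_mem hne)
  rw [mem_Icc] at hmin
  have hnot : A.min' hne - 1 ∉ A := fun h => by
    have := A.min'_le _ h
    omega
  rw [← card_insert_of_notMem hnot]
  refine card_le_card fun y hy => ?_
  rcases mem_insert.1 hy with rfl | hy
  · rw [lowerShadow, mem_filter, mem_Icc, Nat.sub_add_cancel (by omega)]
    exact ⟨by omega, Or.inr (A.min'_mem hne)⟩
  · have := mem_Icc.1 (hA hy)
    rw [lowerShadow, mem_filter, mem_Icc]
    exact ⟨by omega, Or.inl hy⟩

lemma min_le_card_lowerShadow (hA : A ⊆ Icc a (b + 1)) :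
    min (b + 1 - a) #A ≤ #(lowerShadow (Icc a b) A) := by
  by_cases hfull : Icc a (b + 1) ⊆ A
  · refine min_le_left _ _ |>.trans ?_
    rw [← Nat.card_Icc]
    exact card_le_card fun y hy => mem_filter.2
      ⟨hy, Or.inl (hfull (Icc_subset_Icc_right (Nat.le_succ b) hy))⟩
  obtain ⟨g, hg, hgA⟩ := not_subset.1 hfull
  rw [mem_Icc] at hg
  refine min_le_right _ _ |>.trans (card_le_card_of_injOn
    (fun y => if y < g then y else y - 1) (fun y hy => ?_) (fun y hy z hz hyz => ?_))
  · have := mem_Icc.1 (hA hy)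
    have : y ≠ g := fun h => hgA (h ▸ hy)
    simp only [lowerShadow, mem_coe, mem_filter, mem_Icc]
    split_ifs
    · exact ⟨by omega, Or.inl hy⟩
    · exact ⟨by omega, Or.inr (by rwa [Nat.sub_add_cancel (by omega)])⟩
  · have : y ≠ g := fun h => hgA (h ▸ hy)
    have : z ≠ g := fun h => hgA (h ▸ hz)
    simp only at hyz
    split_ifs at hyz <;> omega

lemma card_lowerShadow_Ico_le (hA : A ⊆ Icc a b)
    (h : (a = a' ∧ b = b' + 1) ∨ (a = a' + 1 ∧ b = b')) :
    #(lowerShadow (Icc a' b') (Ico a (a + #A))) ≤ #(lowerShadow (Icc a' b') A) := by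
  rcases h with ⟨rfl, rfl⟩ | ⟨rfl, rfl⟩
  · refine le_trans ?_ (min_le_card_lowerShadow hA)
    calc _ ≤ #(Ico a (min (b' + 1) (a + #A))) := card_le_card fun y hy => by
          simp only [lowerShadow, mem_filter, mem_Icc, mem_Ico] at hy ⊢; omega
      _ = _ := by rw [Nat.card_Ico]; omega
  · rcases A.eq_empty_or_nonempty with rfl | hne
    · simp [lowerShadow]
    refine le_trans ?_ (card_add_one_le_card_lowerShadow hA hne)
    calc _ ≤ #(Icc a' (a' + #A)) := card_le_card fun y hy => by
          simp only [lowerShadow, mem_filter, mem_Icc, mem_Ico] at hy ⊢; omega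
      _ = _ := by rw [Nat.card_Icc]; omega

lemma card_filter_Icc_add_one (p : ℕ → Prop) [DecidablePred p] (a b : ℕ) :
    #((Icc (a + 1) (b + 1)).filter p) = #((Icc a b).filter (fun y => p (y + 1))) := by
  rw [← map_add_right_Icc, filter_map, card_map]
  rfl

lemma card_upperShadow_Ico_le (hA : A ⊆ Icc a b) (ha : 1 ≤ a)
    (h : (a' = a ∧ b' = b + 1) ∨ (a' = a + 1 ∧ b' = b)) :
    #(upperShadow (Icc a' b') (Ico a (a + #A))) ≤ #(upperShadow (Icc a' b') A) := by
  obtain ⟨c, rfl⟩ : ∃ c, a' = c + 1 := ⟨a' - 1, by omega⟩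
  rcases b' with _ | d
  · simp [upperShadow]
  rw [upperShadow, upperShadow, card_filter_Icc_add_one, card_filter_Icc_add_one]
  simpa only [lowerShadow, add_tsub_cancel_right, or_comm] using
    card_lowerShadow_Ico_le hA (by omega)

lemma filter_subset_or_subset {α : Type*} [LinearOrder α] {s : Finset α} {p q : α → Prop}
    [DecidablePred p] [DecidablePred q]
    (hp : ∀ x ∈ s, ∀ y ∈ s, x ≤ y → p y → p x) (hq : ∀ x ∈ s, ∀ y ∈ s, x ≤ y → q y → q x) :
    s.filter p ⊆ s.filter q ∨ s.filter q ⊆ s.filter p := by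
  by_contra! h
  obtain ⟨⟨x, hx, hxq⟩, ⟨y, hy, hyp⟩⟩ := And.imp not_subset.1 not_subset.1 h
  rw [mem_filter] at hx hy
  rcases le_total x y with hxy | hyx
  · exact hxq (mem_filter.2 ⟨hx.1, hq x hx.1 y hy.1 hxy hy.2⟩)
  · exact hyp (mem_filter.2 ⟨hy.1, hp y hy.1 x hx.1 hyx hx.2⟩)

lemma card_upperShadow_union_lowerShadow_Ico_le {B : Finset ℕ} {a₁ b₁ a₂ b₂ : ℕ}
    (hA : A ⊆ Icc a₁ b₁) (hB : B ⊆ Icc a₂ b₂) (ha₁ : 1 ≤ a₁)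
    (h₁ : (a = a₁ ∧ b = b₁ + 1) ∨ (a = a₁ + 1 ∧ b = b₁))
    (h₂ : (a₂ = a ∧ b₂ = b + 1) ∨ (a₂ = a + 1 ∧ b₂ = b)) :
    #(upperShadow (Icc a b) (Ico a₁ (a₁ + #A)) ∪ lowerShadow (Icc a b) (Ico a₂ (a₂ + #B))) ≤
      #(upperShadow (Icc a b) A ∪ lowerShadow (Icc a b) B) := by
  -- both shadows of initial segments are initial segments of the window
  have hnested : upperShadow (Icc a b) (Ico a₁ (a₁ + #A)) ⊆
        lowerShadow (Icc a b) (Ico a₂ (a₂ + #B)) ∨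
      lowerShadow (Icc a b) (Ico a₂ (a₂ + #B)) ⊆ upperShadow (Icc a b) (Ico a₁ (a₁ + #A)) :=
    filter_subset_or_subset
      (fun x hx y _ hxy hy => by simp only [mem_Icc, mem_Ico] at hx hy ⊢; omega)
      (fun x hx y _ hxy hy => by simp only [mem_Icc, mem_Ico] at hx hy ⊢; omega)
  rcases hnested with h | h
  · rw [union_eq_right.2 h]
    exact (card_lowerShadow_Ico_le hB h₂).trans (card_le_card subset_union_right)
  · rw [union_eq_left.2 h]
    exact (card_upperShadow_Ico_le hA ha₁ h₁).trans (card_le_card subset_union_left)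

end Shadow

lemma mem_gridSet {n : ℕ} {p : ℕ × ℕ} :
    p ∈ gridSet n ↔ 1 ≤ p.1 ∧ p.1 ≤ n ∧ 1 ≤ p.2 ∧ p.2 ≤ n := by
  simp [gridSet, and_assoc]

lemma gridAdj_iff {p q : ℕ × ℕ} :
    gridAdj p q ↔ (p.1 = q.1 ∧ (p.2 = q.2 + 1 ∨ q.2 = p.2 + 1)) ∨
      (p.2 = q.2 ∧ (p.1 = q.1 + 1 ∨ q.1 = p.1 + 1)) := by
  unfold gridAdj
  rcases abs_cases ((p.1 : ℤ) - q.1) with ⟨h1, _⟩ | ⟨h1, _⟩ <;>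
    rcases abs_cases ((p.2 : ℤ) - q.2) with ⟨h2, _⟩ | ⟨h2, _⟩ <;>
      rw [h1, h2] <;> omega

lemma exists_gridAdj_iff {S : Finset (ℕ × ℕ)} {x y : ℕ} (hx : 1 ≤ x) (hy : 1 ≤ y) :
    (∃ p ∈ S, gridAdj p (x, y)) ↔
      (x - 1, y) ∈ S ∨ (x, y - 1) ∈ S ∨ (x + 1, y) ∈ S ∨ (x, y + 1) ∈ S := by
  constructor
  · rintro ⟨⟨p₁, p₂⟩, hp, hadj⟩
    rw [gridAdj_iff] at hadj
    simp only at hadj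
    rcases hadj with ⟨rfl, rfl | h⟩ | ⟨rfl, rfl | h⟩
    · exact Or.inr (Or.inr (Or.inr hp))
    · obtain rfl : p₂ = y - 1 := by omega
      exact Or.inr (Or.inl hp)
    · exact Or.inr (Or.inr (Or.inl hp))
    · obtain rfl : p₁ = x - 1 := by omega
      exact Or.inl hp
  · rintro (h | h | h | h) <;> exact ⟨_, h, by rw [gridAdj_iff]; omega⟩

def diagYs (S : Finset (ℕ × ℕ)) (i : ℕ) : Finset ℕ :=
  (S.filter (fun p => p.1 + p.2 = i)).image Prod.snd

lemma mem_diagYs {S : Finset (ℕ × ℕ)} {i y : ℕ} : y ∈ diagYs S i ↔ y ≤ i ∧ (i - y, y) ∈ S := by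
  simp only [diagYs, mem_image, mem_filter, Prod.exists]
  constructor
  · rintro ⟨x, y, ⟨hp, rfl⟩, rfl⟩
    simpa using hp
  · rintro ⟨hy, hp⟩
    exact ⟨i - y, y, ⟨hp, by omega⟩, rfl⟩

lemma card_diagYs (S : Finset (ℕ × ℕ)) (i : ℕ) :
    #(diagYs S i) = #(S.filter (fun p => p.1 + p.2 = i)) :=
  card_image_of_injOn fun p hp q hq h => by
    simp only [coe_filter, Set.mem_ofPred_eq] at hp hq
    exact Prod.ext (by omega) h

def diagLo (n i : ℕ) : ℕ := max 1 (i - n)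

def diagHi (n i : ℕ) : ℕ := min n (i - 1)

lemma mem_Icc_diagLo_diagHi {n i y : ℕ} :
    y ∈ Icc (diagLo n i) (diagHi n i) ↔ y ≤ i ∧ (i - y, y) ∈ gridSet n := by
  simp only [mem_Icc, diagLo, diagHi, mem_gridSet]
  omega

lemma one_le_diagLo (n i : ℕ) : 1 ≤ diagLo n i := le_max_left _ _

lemma diagYs_subset_Icc {n : ℕ} {S : Finset (ℕ × ℕ)} (hS : S ⊆ gridSet n) (i : ℕ) :
    diagYs S i ⊆ Icc (diagLo n i) (diagHi n i) := fun y hy => by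
  rw [mem_diagYs] at hy
  exact mem_Icc_diagLo_diagHi.2 ⟨hy.1, hS hy.2⟩

lemma diagLo_diagHi_succ (n : ℕ) {i : ℕ} (hi : 1 ≤ i) :
    (diagLo n (i + 1) = diagLo n i ∧ diagHi n (i + 1) = diagHi n i + 1) ∨
      (diagLo n (i + 1) = diagLo n i + 1 ∧ diagHi n (i + 1) = diagHi n i) := by
  simp only [diagLo, diagHi]
  omega

lemma diagYs_gridNbr (n i : ℕ) (S : Finset (ℕ × ℕ)) :
    diagYs (gridNbr n S) i =
      (upperShadow (Icc (diagLo n i) (diagHi n i)) (diagYs S (i - 1)) ∪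
        lowerShadow (Icc (diagLo n i) (diagHi n i)) (diagYs S (i + 1))) \ diagYs S i := by
  ext y
  simp only [mem_sdiff, mem_union, upperShadow, lowerShadow, mem_filter, mem_diagYs]
  by_cases hy : y ∈ Icc (diagLo n i) (diagHi n i)
  · obtain ⟨hyi, hg⟩ := mem_Icc_diagLo_diagHi.1 hy
    have hg' := mem_gridSet.1 hg
    simp only at hg'
    simp only [gridNbr, mem_filter, hg, hy, hyi, exists_gridAdj_iff hg'.1 hg'.2.2.1]
    rw [show i - 1 - y = i - y - 1 by omega, show i - 1 - (y - 1) = i - y by omega,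
      show i + 1 - y = i - y + 1 by omega, show i + 1 - (y + 1) = i - y by omega]
    simp only [show y ≤ i - 1 by omega, show y - 1 ≤ i - 1 by omega, show y ≤ i + 1 by omega,
      show y + 1 ≤ i + 1 by omega, true_and]
    tauto
  · simp only [hy, false_and, or_self, iff_false, gridNbr, mem_filter, not_and]
    exact fun hyi hg => absurd (mem_Icc_diagLo_diagHi.2 ⟨hyi, hg⟩) hy

lemma deltaN_eq_sum (n : ℕ) (S : Finset (ℕ × ℕ)) :
    deltaN n S = ∑ i ∈ Icc 2 (2 * n), #(diagYs (gridNbr n S) i) := by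
  rw [deltaN, card_eq_sum_card_fiberwise (f := fun p => p.1 + p.2) (t := Icc 2 (2 * n))]
  · simp only [card_diagYs]
  · intro p hp
    have := mem_gridSet.1 (mem_filter.1 hp).1
    simp only [coe_Icc, Set.mem_Icc]
    omega

def downRightShiftClass (n c : ℕ) (Q : Finset (ℕ × ℕ)) : Finset (ℕ × ℕ) :=
  (gridSet n).filter (fun v => (v.1 + v.2) % 2 = c ∧
    #((Ui n (v.1 + v.2)).filter (fun u => u.2 ≤ v.2)) ≤ #(Q ∩ Ui n (v.1 + v.2)))

lemma card_Ui_filter_snd_le {n i y : ℕ} (hy : y ∈ Icc (diagLo n i) (diagHi n i)) :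
    #((Ui n i).filter (fun u => u.2 ≤ y)) = y + 1 - diagLo n i := by
  rw [← Nat.card_Icc]
  refine card_nbij' Prod.snd (fun z => (i - z, z)) ?_ ?_ ?_ ?_ <;> intro u hu <;>
    simp only [mem_coe, mem_filter, mem_Icc, Ui, mem_gridSet, diagLo, diagHi, Prod.ext_iff,
      and_true] at hu hy ⊢ <;> omega

lemma card_inter_Ui_eq_card_diagYs {n : ℕ} {Q : Finset (ℕ × ℕ)} (hQ : Q ⊆ gridSet n) (i : ℕ) :
    #(Q ∩ Ui n i) = #(diagYs Q i) := by
  rw [card_diagYs, Ui, inter_filter, inter_eq_left.2 hQ]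

lemma diagYs_eq_empty_of_mod_two_ne {S : Finset (ℕ × ℕ)} {c i : ℕ}
    (hc : ∀ p ∈ S, (p.1 + p.2) % 2 = c) (hi : i % 2 ≠ c) : diagYs S i = ∅ :=
  eq_empty_of_forall_notMem fun y hy => by
    obtain ⟨hyi, hp⟩ := mem_diagYs.1 hy
    have := hc _ hp
    simp only at this
    omega

lemma diagYs_downRightShiftClass {n c : ℕ} {Q : Finset (ℕ × ℕ)} (hQ : Q ⊆ gridSet n)
    (hc : ∀ p ∈ Q, (p.1 + p.2) % 2 = c) (i : ℕ) :
    diagYs (downRightShiftClass n c Q) i = Ico (diagLo n i) (diagLo n i + #(diagYs Q i)) := by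
  have hcard : #(diagYs Q i) ≤ diagHi n i + 1 - diagLo n i :=
    Nat.card_Icc _ _ ▸ card_le_card (diagYs_subset_Icc hQ i)
  by_cases hi : i % 2 = c
  · ext y
    rw [mem_diagYs, mem_Ico, downRightShiftClass, mem_filter]
    constructor
    · rintro ⟨hyi, hg, -, hrank⟩
      have hy := mem_Icc_diagLo_diagHi.2 ⟨hyi, hg⟩
      rw [Nat.sub_add_cancel hyi, card_Ui_filter_snd_le hy, card_inter_Ui_eq_card_diagYs hQ]
        at hrank
      rw [mem_Icc] at hy
      omega
    · intro h
      have hy : y ∈ Icc (diagLo n i) (diagHi n i) := mem_Icc.2 (by omega)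
      obtain ⟨hyi, hg⟩ := mem_Icc_diagLo_diagHi.1 hy
      rw [Nat.sub_add_cancel hyi, card_Ui_filter_snd_le hy, card_inter_Ui_eq_card_diagYs hQ]
      exact ⟨hyi, hg, hi, by omega⟩
  · rw [diagYs_eq_empty_of_mod_two_ne hc hi, card_empty, add_zero, Ico_self]
    exact diagYs_eq_empty_of_mod_two_ne (fun p hp => (mem_filter.1 hp).2.1) hi

lemma card_diagYs_gridNbr_downRightShiftClass_le {n c i : ℕ} {Q : Finset (ℕ × ℕ)}
    (hQ : Q ⊆ gridSet n) (hc : ∀ p ∈ Q, (p.1 + p.2) % 2 = c) (hi : 2 ≤ i) :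
    #(diagYs (gridNbr n (downRightShiftClass n c Q)) i) ≤ #(diagYs (gridNbr n Q) i) := by
  simp only [diagYs_gridNbr, diagYs_downRightShiftClass hQ hc]
  by_cases hQi : diagYs Q i = ∅
  · rw [hQi, card_empty, add_zero, Ico_self, sdiff_empty, sdiff_empty]
    have hlow := diagLo_diagHi_succ n (i := i - 1) (by omega)
    rw [Nat.sub_add_cancel (by omega : 1 ≤ i)] at hlow
    exact card_upperShadow_union_lowerShadow_Ico_le (diagYs_subset_Icc hQ _)
      (diagYs_subset_Icc hQ _) (one_le_diagLo n _) hlow (diagLo_diagHi_succ n (by omega))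
  · -- `i` has the parity of `Q`, so `Q` misses the diagonals `i ± 1`
    obtain ⟨y, hy⟩ := nonempty_iff_ne_empty.2 hQi
    obtain ⟨hyi, hp⟩ := mem_diagYs.1 hy
    have hic := hc _ hp
    simp only [Nat.sub_add_cancel hyi] at hic
    rw [diagYs_eq_empty_of_mod_two_ne hc (by omega : (i - 1) % 2 ≠ c),
      diagYs_eq_empty_of_mod_two_ne hc (by omega : (i + 1) % 2 ≠ c)]
    simp [upperShadow, lowerShadow]

theorem deltaN_downRightShiftClass_le {n c : ℕ} {Q : Finset (ℕ × ℕ)} (hQ : Q ⊆ gridSet n)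
    (hc : ∀ p ∈ Q, (p.1 + p.2) % 2 = c) : deltaN n (downRightShiftClass n c Q) ≤ deltaN n Q := by
  rw [deltaN_eq_sum, deltaN_eq_sum]
  exact sum_le_sum fun i hi =>
    card_diagYs_gridNbr_downRightShiftClass_le hQ hc (mem_Icc.1 hi).1

def mirror (n : ℕ) (p : ℕ × ℕ) : ℕ × ℕ := (n + 1 - p.1, p.2)

def mirrorSet (n : ℕ) (S : Finset (ℕ × ℕ)) : Finset (ℕ × ℕ) :=
  (gridSet n).filter (fun p => mirror n p ∈ S)

lemma mem_mirrorSet {n : ℕ} {S : Finset (ℕ × ℕ)} {p : ℕ × ℕ} :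
    p ∈ mirrorSet n S ↔ p ∈ gridSet n ∧ mirror n p ∈ S :=
  mem_filter

section Mirror

variable {n : ℕ} {p q : ℕ × ℕ}

lemma mirror_mem_gridSet (hp : p ∈ gridSet n) : mirror n p ∈ gridSet n := by
  rw [mem_gridSet] at hp ⊢
  simp only [mirror]
  omega

lemma mirror_mirror (hp : p ∈ gridSet n) : mirror n (mirror n p) = p := by
  rw [mem_gridSet] at hp
  simp only [mirror, Prod.ext_iff, and_true]
  omega

lemma gridAdj_mirror (hp : p ∈ gridSet n) (hq : q ∈ gridSet n) :
    gridAdj (mirror n p) (mirror n q) ↔ gridAdj p q := by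
  rw [mem_gridSet] at hp hq
  simp only [gridAdj_iff, mirror]
  constructor <;> intro h <;> omega

lemma mirror_mem_gridNbr_mirrorSet_iff {S : Finset (ℕ × ℕ)} (hS : S ⊆ gridSet n)
    (hq : q ∈ gridSet n) : mirror n q ∈ gridNbr n (mirrorSet n S) ↔ q ∈ gridNbr n S := by
  simp only [gridNbr, mem_filter, mem_mirrorSet, mirror_mem_gridSet hq, hq, mirror_mirror hq,
    true_and]
  refine and_congr_right fun _ => ⟨?_, ?_⟩
  · rintro ⟨p, ⟨hp, hpS⟩, hadj⟩
    refine ⟨mirror n p, hpS, (gridAdj_mirror (mirror_mem_gridSet hp) hq).1 ?_⟩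
    rwa [mirror_mirror hp]
  · rintro ⟨p, hpS, hadj⟩
    refine ⟨mirror n p, ⟨mirror_mem_gridSet (hS hpS), ?_⟩, (gridAdj_mirror (hS hpS) hq).2 hadj⟩
    rwa [mirror_mirror (hS hpS)]

lemma deltaN_mirrorSet {S : Finset (ℕ × ℕ)} (hS : S ⊆ gridSet n) :
    deltaN n (mirrorSet n S) = deltaN n S := by
  have hgrid {T : Finset (ℕ × ℕ)} {q : ℕ × ℕ} (hq : q ∈ gridNbr n T) : q ∈ gridSet n :=
    (mem_filter.1 hq).1
  refine card_nbij' (mirror n) (mirror n) (fun q hq => ?_) (fun q hq => ?_)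
    (fun q hq => mirror_mirror (hgrid hq)) (fun q hq => mirror_mirror (hgrid hq))
  · rw [mem_coe] at hq ⊢
    have hq' := mirror_mem_gridSet (hgrid hq)
    rwa [← mirror_mem_gridNbr_mirrorSet_iff hS hq', mirror_mirror (hgrid hq)]
  · exact (mirror_mem_gridNbr_mirrorSet_iff hS (hgrid hq)).2 hq

lemma card_filter_Wi_mirror (hp : p ∈ gridSet n) :
    #((Wi n ((mirror n p).1 - (mirror n p).2)).filter (fun u => u.2 ≤ (mirror n p).2)) =
      #((Ui n (p.1 + p.2)).filter (fun u => u.2 ≤ p.2)) := by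
  rw [mem_gridSet] at hp
  refine card_nbij' (mirror n) (mirror n) ?_ ?_ ?_ ?_ <;> intro u hu <;>
    simp only [mem_coe, mem_filter, Wi, Ui, mem_gridSet] at hu ⊢ <;>
    simp only [mirror, Prod.ext_iff, and_true] at hu ⊢ <;> omega

lemma card_inter_Wi_mirror (Q : Finset (ℕ × ℕ)) (hp : p ∈ gridSet n) :
    #(Q ∩ Wi n ((mirror n p).1 - (mirror n p).2)) = #(mirrorSet n Q ∩ Ui n (p.1 + p.2)) := by
  have hgrid {u : ℕ × ℕ} (hu : u ∈ Ui n (p.1 + p.2)) : u ∈ gridSet n := (mem_filter.1 hu).1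
  have hgrid' {u : ℕ × ℕ} {d : ℤ} (hu : u ∈ Wi n d) : u ∈ gridSet n := (mem_filter.1 hu).1
  have hW {u : ℕ × ℕ} (hu : u ∈ gridSet n) :
      mirror n u ∈ Wi n ((mirror n p).1 - (mirror n p).2) ↔ u ∈ Ui n (p.1 + p.2) := by
    rw [mem_gridSet] at hp hu
    simp only [Wi, Ui, mem_filter, mem_gridSet]
    simp only [mirror]
    omega
  refine card_nbij' (mirror n) (mirror n) (fun u hu => ?_) (fun u hu => ?_)
    (fun u hu => mirror_mirror (hgrid' (mem_inter.1 hu).2))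
    (fun u hu => mirror_mirror (hgrid (mem_inter.1 hu).2))
  · obtain ⟨huQ, huW⟩ := mem_inter.1 hu
    have hu' := mirror_mem_gridSet (hgrid' huW)
    refine mem_inter.2 ⟨mem_mirrorSet.2 ⟨hu', ?_⟩, (hW hu').1 ?_⟩ <;>
      rwa [mirror_mirror (hgrid' huW)]
  · obtain ⟨huQ, huU⟩ := mem_inter.1 hu
    exact mem_inter.2 ⟨(mem_mirrorSet.1 huQ).2, (hW (hgrid huU)).2 huU⟩

lemma mod_two_of_mem_mirrorSet {Q : Finset (ℕ × ℕ)} {c : ℕ}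
    (hQ : ∀ p ∈ Q, (p.1 + p.2) % 2 = c) (hp : p ∈ mirrorSet n Q) :
    (p.1 + p.2) % 2 = (n + 1 + c) % 2 := by
  obtain ⟨hp, hpQ⟩ := mem_mirrorSet.1 hp
  have := hQ _ hpQ
  rw [mem_gridSet] at hp
  simp only [mirror] at this
  omega

end Mirror

lemma mirrorSet_downLeftShift (n : ℕ) (Q : Finset (ℕ × ℕ)) :
    mirrorSet n (downLeftShift n Q) = downRightShiftClass n ((n + 1) % 2) (mirrorSet n Q) := by
  ext p
  simp only [mem_mirrorSet, downLeftShift, downRightShiftClass, mem_filter]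
  refine and_congr_right fun hp => ?_
  rw [card_filter_Wi_mirror hp, card_inter_Wi_mirror Q hp, Nat.even_iff,
    and_iff_right (mirror_mem_gridSet hp)]
  have := mem_gridSet.1 hp
  refine Iff.and ⟨fun h => ?_, fun h => ?_⟩ Iff.rfl <;> simp only [mirror] at h ⊢ <;> omega

lemma downRightShift_eq_downRightShiftClass (n : ℕ) (Q : Finset (ℕ × ℕ)) :
    downRightShift n Q = downRightShiftClass n 0 Q :=
  filter_congr fun _ _ => by rw [Nat.even_iff]

/-- If Q' is obtained from Q ⊆ V₁ by the down-right shifting, or by the down-left shifting,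
then δ(Q') ≤ δ(Q). -/
theorem deltaN_shift_down (n : ℕ) (Q : Finset (ℕ × ℕ)) (hQ : Q ⊆ V1 n) :
    deltaN n (downRightShift n Q) ≤ deltaN n Q ∧
    deltaN n (downLeftShift n Q) ≤ deltaN n Q := by
  have hQgrid : Q ⊆ gridSet n := hQ.trans (filter_subset _ _)
  have hQeven (p : ℕ × ℕ) (hp : p ∈ Q) : (p.1 + p.2) % 2 = 0 :=
    Nat.even_iff.1 (mem_filter.1 (hQ hp)).2
  refine ⟨?_, ?_⟩
  · rw [downRightShift_eq_downRightShiftClass]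
    exact deltaN_downRightShiftClass_le hQgrid hQeven
  · calc deltaN n (downLeftShift n Q)
        = deltaN n (mirrorSet n (downLeftShift n Q)) :=
          (deltaN_mirrorSet (filter_subset _ _)).symm
      _ = deltaN n (downRightShiftClass n ((n + 1) % 2) (mirrorSet n Q)) := by
          rw [mirrorSet_downLeftShift]
      _ ≤ deltaN n (mirrorSet n Q) :=
          deltaN_downRightShiftClass_le (filter_subset _ _)
            fun _ hp => mod_two_of_mem_mirrorSet hQeven hp
      _ = deltaN n Q := deltaN_mirrorSet hQgrid
end

section
/- Let G be the (n×n)-grid and suppose Q ⊆ V_1 is a pyramidal set. Then δ(Q) = |Q| − |Q ∩ X_n| + |N(Q ∩ X_1) ∩ X̄_1|. -/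
/-- A set Q ⊆ V₁ is pyramidal if for every (x, y) ∈ Q with y ≥ 2:
(x-1, y-1) ∈ Q whenever x ≥ 2, and (x+1, y-1) ∈ Q whenever x ≤ n-1. -/
def Pyramidal (n : ℕ) (Q : Finset (ℕ × ℕ)) : Prop :=
  ∀ x y : ℕ, (x, y) ∈ Q → 2 ≤ y →
    (2 ≤ x → (x - 1, y - 1) ∈ Q) ∧ (x + 1 ≤ n → (x + 1, y - 1) ∈ Q)

/-- Xᵢ = Rᵢ ∩ V₁: the vertices of V₁ in row i (ordered by increasing x-coordinate). -/
def Xi (n i : ℕ) : Finset (ℕ × ℕ) := (V1 n).filter (fun p => p.2 = i)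

/-- X̄ᵢ = Rᵢ ∩ V₂: the grid vertices (x, y) with y = i and x + y odd. -/
def Xbar (n i : ℕ) : Finset (ℕ × ℕ) := (gridSet n).filter (fun p => Odd (p.1 + p.2) ∧ p.2 = i)

lemma adj_iff (p q : ℕ × ℕ) : gridAdj p q ↔
    (p.1 = q.1 ∧ (p.2 = q.2 + 1 ∨ q.2 = p.2 + 1)) ∨
    (p.2 = q.2 ∧ (p.1 = q.1 + 1 ∨ q.1 = p.1 + 1)) := by
  unfold gridAdj
  rcases abs_cases ((p.1 : ℤ) - q.1) with ⟨h1, _⟩ | ⟨h1, _⟩ <;>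
  rcases abs_cases ((p.2 : ℤ) - q.2) with ⟨h3, _⟩ | ⟨h3, _⟩ <;>
  rw [h1, h3] <;> omega

lemma mem_grid {n : ℕ} {v : ℕ × ℕ} : v ∈ gridSet n ↔ 1 ≤ v.1 ∧ v.1 ≤ n ∧ 1 ≤ v.2 ∧ v.2 ≤ n := by
  simp [gridSet, Finset.mem_Icc]; tauto

/-- Parity flips across an edge. -/
lemma adj_parity {p q : ℕ × ℕ} (h : gridAdj p q) (he : Even (p.1 + p.2)) :
    Odd (q.1 + q.2) := by
  rw [adj_iff] at h
  rw [Nat.even_iff] at he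
  rw [Nat.odd_iff]
  rcases h with ⟨h1, h2 | h2⟩ | ⟨h1, h2 | h2⟩ <;> omega

/-- Core step: a neighbor (x,y) of Q with y ≥ 2 has the vertex (x, y-1) directly
below it in Q. -/
lemma below_mem (n : ℕ) (Q : Finset (ℕ × ℕ)) (hQ : Q ⊆ V1 n) (hpyr : Pyramidal n Q)
    (x y : ℕ) (hx1 : 1 ≤ x) (hxn : x ≤ n) (hy : 2 ≤ y)
    (p : ℕ × ℕ) (hp : p ∈ Q) (hadj : gridAdj p (x, y)) : (x, y - 1) ∈ Q := by
  obtain ⟨a, b⟩ := p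
  have hpg : (a, b) ∈ gridSet n := (Finset.mem_filter.mp (hQ hp)).1
  rw [mem_grid] at hpg
  obtain ⟨ha1, han, hb1, hbn⟩ := hpg
  rw [adj_iff] at hadj
  rcases hadj with ⟨h1, h2 | h2⟩ | ⟨h1, h2 | h2⟩
  · -- a = x, b = y + 1 : p is above (x,y)
    by_cases hx2 : 2 ≤ x
    · have h3 := (hpyr a b hp (by omega)).1 (by omega)
      have h4 := (hpyr (a - 1) (b - 1) h3 (by omega)).2 (by omega)
      rwa [show a - 1 + 1 = x by omega, show b - 1 - 1 = y - 1 by omega] at h4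
    · have h3 := (hpyr a b hp (by omega)).2 (by omega)
      have h4 := (hpyr (a + 1) (b - 1) h3 (by omega)).1 (by omega)
      rwa [show a + 1 - 1 = x by omega, show b - 1 - 1 = y - 1 by omega] at h4
  · -- a = x, y = b + 1 : p is (x, y-1) itself
    rwa [show x = a by omega, show y - 1 = b by omega]
  · -- b = y, a = x + 1
    have h3 := (hpyr a b hp (by omega)).1 (by omega)
    rwa [show a - 1 = x by omega, show b - 1 = y - 1 by omega] at h3
  · -- b = y, x = a + 1
    have h3 := (hpyr a b hp (by omega)).2 (by omega)
    rwa [show a + 1 = x by omega, show b - 1 = y - 1 by omega] at h3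

/-- For a pyramidal set Q ⊆ V₁ of the (n×n)-grid,
δ(Q) = |Q| - |Q ∩ Xₙ| + |N(Q ∩ X₁) ∩ X̄₁|. -/
theorem deltaN_pyramidal (n : ℕ) (Q : Finset (ℕ × ℕ)) (hQ : Q ⊆ V1 n)
    (hpyr : Pyramidal n Q) :
    deltaN n Q = Q.card - (Q ∩ Xi n n).card + (gridNbr n (Q ∩ Xi n 1) ∩ Xbar n 1).card := by
  classical
  set B := gridNbr n (Q ∩ Xi n 1) ∩ Xbar n 1 with hB
  have key : gridNbr n Q = (Q \ Xi n n).image (fun p => (p.1, p.2 + 1)) ∪ B := by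
    ext v
    obtain ⟨x, y⟩ := v
    simp only [Finset.mem_union, Finset.mem_image]
    constructor
    · intro hv
      rw [gridNbr, Finset.mem_filter] at hv
      obtain ⟨hvg, hvQ, p, hp, hadj⟩ := hv
      have hvg' := hvg
      rw [mem_grid] at hvg'
      obtain ⟨hx1, hxn, hy1, hyn⟩ := hvg'
      -- parity of v is odd
      have hpV : Even (p.1 + p.2) := (Finset.mem_filter.mp (hQ hp)).2
      have hodd : Odd (x + y) := adj_parity hadj hpV
      by_cases hy2 : 2 ≤ y
      · -- row ≥ 2 : comes from the image
        left
        refine ⟨(x, y - 1), ?_, ?_⟩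
        · rw [Finset.mem_sdiff]
          refine ⟨below_mem n Q hQ hpyr x y hx1 hxn hy2 p hp hadj, ?_⟩
          rw [Xi, Finset.mem_filter]
          push_neg
          intro _
          simp only
          omega
        · simp only
          rw [show y - 1 + 1 = y by omega]
      · -- row 1
        right
        have hy0 : y = 1 := by omega
        subst hy0
        have hx2 : 2 ≤ x := by
          rcases Nat.odd_iff.mp hodd with h
          omega
        -- find a neighbor of v in Q ∩ X₁
        have hmem : ∃ q ∈ Q ∩ Xi n 1, gridAdj q (x, 1) := by
          obtain ⟨a, b⟩ := p
          have hpg : (a, b) ∈ gridSet n := (Finset.mem_filter.mp (hQ hp)).1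
          rw [mem_grid] at hpg
          obtain ⟨ha1, han, hb1, hbn⟩ := hpg
          rw [adj_iff] at hadj
          rcases hadj with ⟨h1, h2 | h2⟩ | ⟨h1, h2 | h2⟩
          · -- a = x, b = 2 : use pyramidal to descend
            have h3 := (hpyr a b hp (by omega)).1 (by omega)
            refine ⟨(a - 1, b - 1), ?_, ?_⟩
            · rw [Finset.mem_inter]
              refine ⟨h3, ?_⟩
              rw [Xi, Finset.mem_filter]
              exact ⟨hQ h3, by simp only; omega⟩
            · rw [adj_iff]
              right
              simp only
              omega
          · omega
          · exact ⟨(a, b), Finset.mem_inter.mpr ⟨hp,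
              Finset.mem_filter.mpr ⟨hQ hp, by simp only; omega⟩⟩, by
              rw [adj_iff]; right; simp only; omega⟩
          · exact ⟨(a, b), Finset.mem_inter.mpr ⟨hp,
              Finset.mem_filter.mpr ⟨hQ hp, by simp only; omega⟩⟩, by
              rw [adj_iff]; right; simp only; omega⟩
        rw [hB, Finset.mem_inter, gridNbr, Finset.mem_filter, Xbar, Finset.mem_filter]
        refine ⟨⟨hvg, ?_, hmem⟩, hvg, hodd, rfl⟩
        intro hc
        exact hvQ (Finset.mem_inter.mp hc).1
    · rintro (⟨⟨a, b⟩, hab, heq⟩ | hvB)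
      · rw [Finset.mem_sdiff] at hab
        obtain ⟨habQ, habX⟩ := hab
        simp only [Prod.mk.injEq] at heq
        obtain ⟨hx, hy⟩ := heq
        have habV : (a, b) ∈ V1 n := hQ habQ
        rw [V1, Finset.mem_filter, mem_grid] at habV
        obtain ⟨⟨ha1, han, hb1, hbn⟩, heven⟩ := habV
        have hbn' : b ≠ n := by
          intro hc
          exact habX (Finset.mem_filter.mpr ⟨hQ habQ, by simp only; omega⟩)
        rw [gridNbr, Finset.mem_filter]
        refine ⟨mem_grid.mpr ⟨by omega, by omega, by omega, by omega⟩, ?_, ⟨(a, b), habQ, ?_⟩⟩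
        · intro hc
          have := (Finset.mem_filter.mp (hQ hc)).2
          simp only at this
          rw [Nat.even_iff] at heven this
          omega
        · rw [adj_iff]
          left
          simp only
          omega
      · rw [hB, Finset.mem_inter, gridNbr, Finset.mem_filter, Xbar, Finset.mem_filter] at hvB
        obtain ⟨⟨hvg, _, p, hp, hadj⟩, _, hodd, _⟩ := hvB
        rw [gridNbr, Finset.mem_filter]
        refine ⟨hvg, ?_, ⟨p, (Finset.mem_inter.mp hp).1, hadj⟩⟩
        intro hc
        have := (Finset.mem_filter.mp (hQ hc)).2
        simp only at this
        rw [Nat.even_iff] at this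
        rw [Nat.odd_iff] at hodd
        omega
  have hdisj : Disjoint ((Q \ Xi n n).image (fun p => (p.1, p.2 + 1))) B := by
    rw [Finset.disjoint_left]
    rintro ⟨x, y⟩ hv hvB
    rw [Finset.mem_image] at hv
    obtain ⟨⟨a, b⟩, hab, heq⟩ := hv
    simp only [Prod.mk.injEq] at heq
    have hb1 : 1 ≤ b := by
      have := (Finset.mem_filter.mp (hQ (Finset.mem_sdiff.mp hab).1)).1
      exact (mem_grid.mp this).2.2.1
    rw [hB, Finset.mem_inter, Xbar, Finset.mem_filter] at hvB
    obtain ⟨_, _, _, hy1⟩ := hvB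
    simp only at hy1
    omega
  have hinj : Set.InjOn (fun p : ℕ × ℕ => (p.1, p.2 + 1)) ↑(Q \ Xi n n) := by
    rintro ⟨a, b⟩ _ ⟨c, d⟩ _ h
    simp only [Prod.mk.injEq] at h ⊢
    omega
  rw [deltaN, key, Finset.card_union_of_disjoint hdisj, Finset.card_image_of_injOn hinj]
  congr 1
  rw [show Q \ Xi n n = Q \ (Q ∩ Xi n n) by rw [Finset.sdiff_inter_self_left],
    Finset.card_sdiff_of_subset Finset.inter_subset_left]
end

section
/- Let G be the (n×n)-grid and let Q ⊆ V_1 be a pyramidal set with i_1(Q) ≥ i_2(Q). Then the set Q' obtained from Q by the left shifting is left-pyramidal and satisfies δ(Q') ≤ δ(Q). -/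
/-- A pyramidal set Q is left-pyramidal if (x,y) ∈ Q and x ≥ 3 imply (x-2, y) ∈ Q. -/
def LeftPyramidal (n : ℕ) (Q : Finset (ℕ × ℕ)) : Prop :=
  Pyramidal n Q ∧ ∀ x y : ℕ, (x, y) ∈ Q → 3 ≤ x → (x - 2, y) ∈ Q

/-- i₁(Q): the largest y with (1, y) ∈ Q, or 0 if there is none. -/
def i1 (Q : Finset (ℕ × ℕ)) : ℕ := (Q.filter (fun p => p.1 = 1)).sup Prod.snd

/-- i₂(Q): the largest y with (n, y) ∈ Q, or 0 if there is none. -/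
def i2 (n : ℕ) (Q : Finset (ℕ × ℕ)) : ℕ := (Q.filter (fun p => p.1 = n)).sup Prod.snd

/-- The left shifting of Q ⊆ V₁: in each row, the r = |Xᵢ ∩ Q| vertices of Xᵢ ∩ Q are
replaced by the first r vertices x₁ⁱ, ..., x_rⁱ of Xᵢ (by increasing x-coordinate).
A vertex v of V₁ belongs to the shifted set iff its rank in its row (within V₁) is ≤ r. -/
def leftShift (n : ℕ) (Q : Finset (ℕ × ℕ)) : Finset (ℕ × ℕ) :=
  (gridSet n).filter (fun v => Even (v.1 + v.2) ∧
    ((Xi n v.2).filter (fun u => u.1 ≤ v.1)).card ≤ (Q ∩ Xi n v.2).card)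

/-!
Work row by row. For `S ⊆ V₁` let `A_y` be the set of `x`-coordinates of `S` in row `y` and
`H(A)` the neighbourhood of `A` in the path `1, …, n`. Then `S` is pyramidal iff
`H(A_y) ⊆ A_{y-1}` for all `y ≥ 2`, and in that case `N(S)` meets row `1` in `H(A_1)` and row
`y ≥ 2` in a copy of `A_{y-1}`. Left shifting replaces each `A_y` by the prefix `P_y` of its
parity class of the same size, so both claims reduce to `|H(P_y)| ≤ |H(A_y)|`: for `δ` directly,
and for pyramidality because `H(P_y)` and `P_{y-1}` are prefixes of the same parity class.
The inequality comes from `|H(A)| = |A| - [n ∈ A] + r(A)`, where `r(A)` counts the maximal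
progressions `a, a + 2, …` in `A` not starting at `1`. This is where `i₁(Q) ≥ i₂(Q)` is needed:
the left edge of a pyramidal set zigzags down from `(1, i₁(Q))`, so `n ∈ A_y` forces the first
vertex of row `y` into `A_y`, and then a gap in `A_y` creates an extra progression.
-/

open Finset

namespace GridShift

lemma card_filter_Icc_mod_two {b : ℕ} (hb : b ≤ 1) (x : ℕ) :
    #((Icc 1 x).filter (· % 2 = b)) = (x + b) / 2 := by
  induction x with
  | zero => simp only [zero_lt_one, Icc_eq_empty_of_lt, filter_empty, card_empty]; omega
  | succ m ih =>
    rw [← insert_Icc_right_eq_Icc_add_one (by omega), filter_insert]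
    split_ifs with h
    · rw [card_insert_of_notMem (by simp), ih]; omega
    · rw [ih]; omega

section Path

variable {n b k : ℕ} {A : Finset ℕ}

def pathNbr (n : ℕ) (A : Finset ℕ) : Finset ℕ :=
  (Icc 1 n).filter (fun z => z + 1 ∈ A ∨ z - 1 ∈ A)

/-- The starts, other than `1`, of the maximal progressions `a, a + 2, a + 4, …` in `A`. -/
def runStarts (A : Finset ℕ) : Finset ℕ := A.filter (fun a => 2 ≤ a ∧ a - 2 ∉ A)

/-- The first `k` elements of `{1, …, n}` of parity `b`. -/
def parityPrefix (n b k : ℕ) : Finset ℕ := (Icc 1 n).filter (fun z => z % 2 = b ∧ z ≤ 2 * k)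

lemma card_pathNbr_le : #(pathNbr n A) ≤ #A + #(runStarts A) :=
  calc #(pathNbr n A) ≤ #(A.image (· + 1) ∪ (runStarts A).image (· - 1)) := by
        refine card_le_card fun z hz => ?_
        simp only [pathNbr, mem_filter, mem_Icc] at hz
        simp only [mem_union, mem_image, runStarts, mem_filter]
        by_cases h : z - 1 ∈ A
        · exact Or.inl ⟨z - 1, h, by omega⟩
        · refine Or.inr ⟨z + 1, ⟨hz.2.resolve_right h, by omega, ?_⟩, rfl⟩
          rwa [show z + 1 - 2 = z - 1 by omega]
    _ ≤ #(A.image (· + 1)) + #((runStarts A).image (· - 1)) := card_union_le _ _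
    _ ≤ #A + #(runStarts A) := add_le_add card_image_le card_image_le

lemma card_erase_add_card_runStarts_le (hA : A ⊆ Icc 1 n) :
    #(A.erase n) + #(runStarts A) ≤ #(pathNbr n A) := by
  have hdisj : Disjoint ((A.erase n).image (· + 1)) ((runStarts A).image (· - 1)) := by
    rw [disjoint_left]
    rintro _ h₁ h₂
    simp only [mem_image, mem_erase, runStarts, mem_filter] at h₁ h₂
    obtain ⟨a, ⟨-, ha⟩, rfl⟩ := h₁
    obtain ⟨c, ⟨-, hc2, hc⟩, hca⟩ := h₂
    exact hc (by rwa [show c - 2 = a by omega])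
  calc #(A.erase n) + #(runStarts A)
      = #((A.erase n).image (· + 1)) + #((runStarts A).image (· - 1)) := by
        rw [card_image_of_injective _ (add_left_injective 1), card_image_of_injOn]
        intro u hu v hv (h : u - 1 = v - 1)
        simp only [runStarts, mem_coe, mem_filter] at hu hv
        omega
    _ = #((A.erase n).image (· + 1) ∪ (runStarts A).image (· - 1)) :=
        (card_union_of_disjoint hdisj).symm
    _ ≤ #(pathNbr n A) := by
        refine card_le_card fun z hz => ?_
        simp only [mem_union, mem_image, mem_erase, runStarts, mem_filter] at hz
        simp only [pathNbr, mem_filter, mem_Icc]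
        rcases hz with ⟨a, ⟨han, ha⟩, rfl⟩ | ⟨a, ⟨ha, ha2, -⟩, rfl⟩ <;> have := mem_Icc.1 (hA ha)
        · exact ⟨by omega, Or.inr (by simpa using ha)⟩
        · exact ⟨by omega, Or.inl (by rwa [Nat.sub_add_cancel (by omega)])⟩

lemma exists_mem_runStarts_mem_Ioc {e d : ℕ} (hpar : ∀ a ∈ A, a % 2 = e % 2) (he : e ∉ A)
    (hd : d ∈ A) (hed : e < d) : ∃ a ∈ runStarts A, e < a ∧ a ≤ d := by
  induction d using Nat.strong_induction_on with
  | _ d ih =>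
    by_cases h : d - 2 ∈ A
    · have hne : d - 2 ≠ e := fun h' => he (h' ▸ h)
      have := hpar d hd
      obtain ⟨a, ha, hea, had⟩ := ih (d - 2) (by omega) h (by omega)
      exact ⟨a, ha, hea, by omega⟩
    · have := hpar d hd
      exact ⟨d, mem_filter.2 ⟨hd, by omega, h⟩, hed, le_rfl⟩

lemma parityPrefix_mono {m : ℕ} (h : k ≤ m) : parityPrefix n b k ⊆ parityPrefix n b m := by
  intro z hz
  simp only [parityPrefix, mem_filter, mem_Icc] at hz ⊢
  omega

lemma card_parityPrefix (hb : b ≤ 1) : #(parityPrefix n b k) = min k ((n + b) / 2) := by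
  have : parityPrefix n b k = (Icc 1 (min (2 * k) n)).filter (· % 2 = b) := by
    ext z
    simp only [parityPrefix, mem_filter, mem_Icc]
    omega
  rw [this, card_filter_Icc_mod_two hb]
  omega

lemma parityPrefix_subset_of_card_le {m : ℕ}
    (h : #(parityPrefix n b k) ≤ #(parityPrefix n b m)) :
    parityPrefix n b k ⊆ parityPrefix n b m := by
  rcases le_total k m with hkm | hmk
  · exact parityPrefix_mono hkm
  · exact (eq_of_subset_of_card_le (parityPrefix_mono hmk) h).ge

lemma exists_pathNbr_parityPrefix_eq (hb : b ≤ 1) :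
    ∃ m, pathNbr n (parityPrefix n b k) = parityPrefix n (1 - b) m := by
  refine ⟨if k = 0 ∨ n < 2 then 0 else k + 1 - b, ?_⟩
  ext z
  simp only [pathNbr, parityPrefix, mem_filter, mem_Icc]
  split_ifs <;> omega

lemma runStarts_parityPrefix_subset : runStarts (parityPrefix n b k) ⊆ {2} := by
  intro a ha
  simp only [runStarts, parityPrefix, mem_filter, mem_Icc, mem_singleton] at ha ⊢
  omega

lemma card_le_of_forall_mod_two_eq (hA : A ⊆ Icc 1 n) (hpar : ∀ a ∈ A, a % 2 = b)
    (hb : b ≤ 1) : #A ≤ (n + b) / 2 :=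
  calc #A ≤ #(parityPrefix n b n) := card_le_card fun a ha => by
        have := mem_Icc.1 (hA ha)
        have := hpar a ha
        simp only [parityPrefix, mem_filter, mem_Icc]
        omega
    _ = (n + b) / 2 := by rw [card_parityPrefix hb]; omega

lemma card_parityPrefix_card (hA : A ⊆ Icc 1 n) (hpar : ∀ a ∈ A, a % 2 = b) (hb : b ≤ 1) :
    #(parityPrefix n b #A) = #A := by
  rw [card_parityPrefix hb]
  exact min_eq_left (card_le_of_forall_mod_two_eq hA hpar hb)

lemma card_add_card_runStarts_parityPrefix_le (hA : A ⊆ Icc 1 n) (hpar : ∀ a ∈ A, a % 2 = b)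
    (hn : n ∈ A → 2 - b ∈ A) (hPA : ¬ parityPrefix n b #A ⊆ A) :
    #A + #(runStarts (parityPrefix n b #A)) ≤ #(A.erase n) + #(runStarts A) := by
  set P := parityPrefix n b #A with hP
  obtain ⟨e, heP, heA⟩ := not_subset.1 hPA
  have he : 1 ≤ e ∧ e ≤ n ∧ e % 2 = b := by
    simp only [hP, parityPrefix, mem_filter, mem_Icc] at heP
    omega
  have h0 : 0 ∉ A := fun h => by simpa using hA h
  have hupper (hnA : n ∈ A) : ∃ u ∈ runStarts A, 2 - b < u := by
    have he' : e ≠ 2 - b ∧ e ≠ n := ⟨fun h => heA (h ▸ hn hnA), fun h => heA (h ▸ hnA)⟩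
    obtain ⟨u, hu, heu, -⟩ := exists_mem_runStarts_mem_Ioc (fun a ha => by rw [hpar a ha, he.2.2])
      heA hnA (by omega)
    exact ⟨u, hu, by omega⟩
  have hlower (hPs : (runStarts P).Nonempty) : ∃ l ∈ runStarts A, n ∈ A → l ≤ 2 - b := by
    obtain ⟨p, hp⟩ := hPs
    have h2P : 2 ∈ P := mem_singleton.1 (runStarts_parityPrefix_subset hp) ▸ (mem_filter.1 hp).1
    have hb : b = 0 ∧ 1 ≤ #A := by
      simp only [hP, parityPrefix, mem_filter, mem_Icc] at h2P
      omega
    have hpar0 : ∀ a ∈ A, a % 2 = 0 % 2 := fun a ha => by rw [hpar a ha, hb.1]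
    by_cases hnA : n ∈ A
    · obtain ⟨l, hl, -, hl2⟩ := exists_mem_runStarts_mem_Ioc hpar0 h0
        (by simpa [hb.1] using hn hnA) two_pos
      exact ⟨l, hl, fun _ => by omega⟩
    · obtain ⟨d, hd⟩ := card_pos.1 hb.2
      obtain ⟨l, hl, -⟩ := exists_mem_runStarts_mem_Ioc hpar0 h0 hd
        (Nat.pos_of_ne_zero fun h => h0 (h ▸ hd))
      exact ⟨l, hl, fun h => absurd h hnA⟩
  have hPs : #(runStarts P) ≤ 1 :=
    (card_le_card runStarts_parityPrefix_subset).trans_eq (card_singleton 2)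
  rcases (runStarts P).eq_empty_or_nonempty with hPe | hPne <;> by_cases hnA : n ∈ A
  · obtain ⟨u, hu, -⟩ := hupper hnA
    have := card_pos.2 ⟨u, hu⟩
    rw [hPe, card_empty, ← card_erase_add_one hnA]
    omega
  · rw [hPe, erase_eq_of_notMem hnA, card_empty]
    omega
  · obtain ⟨u, hu, hu2⟩ := hupper hnA
    obtain ⟨l, hl, hl2⟩ := hlower hPne
    have := one_lt_card.2 ⟨l, hl, u, hu, by have := hl2 hnA; omega⟩
    rw [← card_erase_add_one hnA]
    omega
  · obtain ⟨l, hl, -⟩ := hlower hPne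
    have := card_pos.2 ⟨l, hl⟩
    rw [erase_eq_of_notMem hnA]
    omega

lemma card_pathNbr_parityPrefix_le (hA : A ⊆ Icc 1 n) (hpar : ∀ a ∈ A, a % 2 = b) (hb : b ≤ 1)
    (hn : n ∈ A → 2 - b ∈ A) : #(pathNbr n (parityPrefix n b #A)) ≤ #(pathNbr n A) := by
  by_cases hPA : parityPrefix n b #A ⊆ A
  · rw [eq_of_subset_of_card_le hPA (card_parityPrefix_card hA hpar hb).ge]
  calc #(pathNbr n (parityPrefix n b #A))
      ≤ #(parityPrefix n b #A) + #(runStarts (parityPrefix n b #A)) := card_pathNbr_le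
    _ = #A + #(runStarts (parityPrefix n b #A)) := by rw [card_parityPrefix_card hA hpar hb]
    _ ≤ #(A.erase n) + #(runStarts A) := card_add_card_runStarts_parityPrefix_le hA hpar hn hPA
    _ ≤ #(pathNbr n A) := card_erase_add_card_runStarts_le hA

end Path

lemma mem_gridSet {n x y : ℕ} : (x, y) ∈ gridSet n ↔ 1 ≤ x ∧ x ≤ n ∧ 1 ≤ y ∧ y ≤ n := by
  simp [gridSet, and_assoc]

lemma mem_V1 {n x y : ℕ} : (x, y) ∈ V1 n ↔ 1 ≤ x ∧ x ≤ n ∧ 1 ≤ y ∧ y ≤ n ∧ x % 2 = y % 2 := by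
  simp only [V1, mem_filter, mem_gridSet, Nat.even_iff]
  omega

lemma gridAdj_iff {a b c d : ℕ} : gridAdj (a, b) (c, d) ↔
    (a = c ∧ (b = d + 1 ∨ d = b + 1)) ∨ (b = d ∧ (a = c + 1 ∨ c = a + 1)) := by
  unfold gridAdj
  rcases abs_cases ((a : ℤ) - c) with ⟨h₁, _⟩ | ⟨h₁, _⟩ <;>
    rcases abs_cases ((b : ℤ) - d) with ⟨h₂, _⟩ | ⟨h₂, _⟩ <;>
    simp only [h₁, h₂] <;> omega

def row (S : Finset (ℕ × ℕ)) (y : ℕ) : Finset ℕ := (S.filter (·.2 = y)).image Prod.fst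

section Rows

variable {n x y : ℕ} {S Q : Finset (ℕ × ℕ)}

@[simp]
lemma mem_row : x ∈ row S y ↔ (x, y) ∈ S := by
  simp [row]

lemma card_row : #(row S y) = #(S.filter (·.2 = y)) :=
  card_image_of_injOn fun _ hp _ hq h =>
    Prod.ext h ((mem_filter.1 hp).2.trans (mem_filter.1 hq).2.symm)

lemma card_eq_sum_card_row (hS : S ⊆ gridSet n) : #S = ∑ y ∈ Icc 1 n, #(row S y) := by
  simp_rw [card_row]
  refine card_eq_sum_card_fiberwise fun p hp => ?_
  have := mem_gridSet.1 (hS hp)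
  simpa using And.intro this.2.2.1 this.2.2.2

lemma row_subset_Icc (hS : S ⊆ V1 n) : row S y ⊆ Icc 1 n := fun x hx => by
  have := mem_V1.1 (hS (mem_row.1 hx))
  exact mem_Icc.2 ⟨this.1, this.2.1⟩

lemma mod_two_of_mem_row (hS : S ⊆ V1 n) (hx : x ∈ row S y) : x % 2 = y % 2 :=
  (mem_V1.1 (hS (mem_row.1 hx))).2.2.2.2

lemma pyramidal_iff (hS : S ⊆ V1 n) :
    Pyramidal n S ↔ ∀ y, 2 ≤ y → pathNbr n (row S y) ⊆ row S (y - 1) := by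
  constructor
  · intro h y hy z hz
    simp only [pathNbr, mem_filter, mem_Icc, mem_row] at hz
    rw [mem_row]
    rcases hz with ⟨⟨hz1, hzn⟩, hz | hz⟩
    · simpa using (h _ _ hz hy).1 (by omega)
    · simpa [Nat.sub_add_cancel hz1] using (h _ _ hz hy).2 (by omega)
  · intro h x y hxy hy
    have hx := mem_V1.1 (hS hxy)
    refine ⟨fun hx2 => mem_row.1 (h y hy ?_), fun hxn => mem_row.1 (h y hy ?_)⟩ <;>
      simp only [pathNbr, mem_filter, mem_Icc, mem_row]
    · exact ⟨by omega, Or.inl (by rwa [Nat.sub_add_cancel (by omega)])⟩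
    · exact ⟨by omega, Or.inr (by simpa using hxy)⟩

lemma row_succ_subset_pathNbr (hS : S ⊆ V1 n) (hpyr : Pyramidal n S) (hy : 1 ≤ y) :
    row S (y + 1) ⊆ pathNbr n (row S y) := fun x hx => by
  have := mem_V1.1 (hS (mem_row.1 hx))
  have hstep := hpyr x (y + 1) (mem_row.1 hx) (by omega)
  simp only [pathNbr, mem_filter, mem_Icc, mem_row]
  refine ⟨⟨this.1, this.2.1⟩, ?_⟩
  rcases (show 2 ≤ x ∨ x + 1 ≤ n by omega) with h | h
  · exact Or.inr (by simpa using hstep.1 h)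
  · exact Or.inl (by simpa using hstep.2 h)

lemma mem_row_gridNbr (hS : S ⊆ V1 n) : x ∈ row (gridNbr n S) y ↔ (x, y) ∈ gridSet n ∧
    (x + 1 ∈ row S y ∨ x - 1 ∈ row S y ∨ x ∈ row S (y - 1) ∨ x ∈ row S (y + 1)) := by
  simp only [mem_row, gridNbr, mem_filter]
  constructor
  · rintro ⟨hg, -, ⟨a, b⟩, hp, hadj⟩
    refine ⟨hg, ?_⟩
    have := mem_gridSet.1 hg
    rcases gridAdj_iff.1 hadj with ⟨rfl, rfl | rfl⟩ | ⟨rfl, rfl | rfl⟩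
    · exact Or.inr (Or.inr (Or.inr hp))
    · exact Or.inr (Or.inr (Or.inl (by simpa using hp)))
    · exact Or.inl hp
    · exact Or.inr (Or.inl (by simpa using hp))
  · rintro ⟨hg, h⟩
    have := mem_gridSet.1 hg
    refine ⟨hg, fun hxS => ?_, ?_⟩
    · have := (mem_V1.1 (hS hxS)).2.2.2.2
      rcases h with h | h | h | h <;> have := (mem_V1.1 (hS h)).2.2.2.2 <;> omega
    · rcases h with h | h | h | h <;> refine ⟨_, h, gridAdj_iff.2 ?_⟩ <;> omega

lemma row_gridNbr_one (hS : S ⊆ V1 n) (hpyr : Pyramidal n S) :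
    row (gridNbr n S) 1 = pathNbr n (row S 1) := by
  ext x
  rw [mem_row_gridNbr hS]
  constructor
  · rintro ⟨hg, h | h | h | h⟩
    · have := mem_gridSet.1 hg
      exact mem_filter.2 ⟨mem_Icc.2 ⟨this.1, this.2.1⟩, Or.inl h⟩
    · have := mem_gridSet.1 hg
      exact mem_filter.2 ⟨mem_Icc.2 ⟨this.1, this.2.1⟩, Or.inr h⟩
    · exact absurd (mem_V1.1 (hS (mem_row.1 h))).2.2.1 (by omega)
    · exact row_succ_subset_pathNbr hS hpyr le_rfl h
  · intro hx
    obtain ⟨hx, h⟩ := mem_filter.1 hx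
    have := mem_Icc.1 hx
    exact ⟨mem_gridSet.2 ⟨this.1, this.2, le_rfl, by omega⟩, by tauto⟩

lemma row_gridNbr_of_two_le (hS : S ⊆ V1 n) (hpyr : Pyramidal n S) (hy : 2 ≤ y) (hyn : y ≤ n) :
    row (gridNbr n S) y = row S (y - 1) := by
  have hsub := (pyramidal_iff hS).1 hpyr y hy
  ext x
  rw [mem_row_gridNbr hS]
  constructor
  · rintro ⟨hg, h | h | h | h⟩
    · have := mem_gridSet.1 hg
      exact hsub (mem_filter.2 ⟨mem_Icc.2 ⟨this.1, this.2.1⟩, Or.inl h⟩)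
    · have := mem_gridSet.1 hg
      exact hsub (mem_filter.2 ⟨mem_Icc.2 ⟨this.1, this.2.1⟩, Or.inr h⟩)
    · exact h
    · exact hsub (row_succ_subset_pathNbr hS hpyr (by omega) h)
  · intro h
    have := mem_V1.1 (hS (mem_row.1 h))
    exact ⟨mem_gridSet.2 ⟨this.1, this.2.1, by omega, hyn⟩, by tauto⟩

lemma deltaN_eq_sum_card_row (S : Finset (ℕ × ℕ)) :
    deltaN n S = ∑ y ∈ Icc 1 n, #(row (gridNbr n S) y) :=
  card_eq_sum_card_row (filter_subset _ _)

end Rows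

section LeftShift

variable {n x y : ℕ} {S Q : Finset (ℕ × ℕ)}

lemma card_filter_Xi_le (hxy : (x, y) ∈ gridSet n) :
    #((Xi n y).filter (·.1 ≤ x)) = (x + y % 2) / 2 := by
  have hxy := mem_gridSet.1 hxy
  have : (Xi n y).filter (·.1 ≤ x) = ((Icc 1 x).filter (· % 2 = y % 2)).image (·, y) := by
    ext ⟨a, c⟩
    simp only [Xi, mem_filter, mem_V1, mem_image, mem_Icc, Prod.mk.injEq]
    constructor
    · rintro ⟨⟨h, rfl⟩, hax⟩
      exact ⟨a, ⟨⟨h.1, hax⟩, h.2.2.2.2⟩, rfl, rfl⟩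
    · rintro ⟨a, ⟨⟨ha1, hax⟩, hpar⟩, rfl, rfl⟩
      exact ⟨⟨⟨ha1, by omega, by omega, by omega, hpar⟩, rfl⟩, hax⟩
  rw [this, card_image_of_injective _ fun _ _ h => (Prod.mk.inj h).1,
    card_filter_Icc_mod_two (by omega)]

lemma card_inter_Xi (hQ : Q ⊆ V1 n) : #(Q ∩ Xi n y) = #(row Q y) := by
  rw [card_row]
  congr 1
  ext p
  simp only [mem_inter, Xi, mem_filter]
  exact ⟨fun h => ⟨h.1, h.2.2⟩, fun h => ⟨h.1, hQ h.1, h.2⟩⟩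

lemma leftShift_subset_V1 : leftShift n Q ⊆ V1 n := fun _ hv =>
  mem_filter.2 ⟨(mem_filter.1 hv).1, (mem_filter.1 hv).2.1⟩

lemma row_leftShift (hQ : Q ⊆ V1 n) (y : ℕ) :
    row (leftShift n Q) y = parityPrefix n (y % 2) #(row Q y) := by
  ext x
  rw [mem_row, leftShift, mem_filter, card_inter_Xi hQ]
  simp only [parityPrefix, mem_filter, mem_Icc, Nat.even_iff]
  constructor
  · rintro ⟨hg, hpar, hr⟩
    rw [card_filter_Xi_le hg] at hr
    have := mem_gridSet.1 hg
    omega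
  · rintro ⟨hx, hpar, hr⟩
    obtain ⟨z, hz⟩ := card_pos.1 (by omega : 0 < #(row Q y))
    have := mem_V1.1 (hQ (mem_row.1 hz))
    have hg : (x, y) ∈ gridSet n := mem_gridSet.2 ⟨hx.1, hx.2, this.2.2.1, this.2.2.2.1⟩
    refine ⟨hg, by omega, ?_⟩
    rw [card_filter_Xi_le hg]
    omega

lemma card_row_leftShift (hQ : Q ⊆ V1 n) (y : ℕ) : #(row (leftShift n Q) y) = #(row Q y) := by
  rw [row_leftShift hQ, card_parityPrefix_card (row_subset_Icc hQ)
    (fun _ => mod_two_of_mem_row hQ) (by omega)]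

/-- `2 - y % 2` is the smallest `x` with `(x, y) ∈ V₁`. -/
lemma leftmost_mem_of_le (hpyr : Pyramidal n S) (hn : 2 ≤ n) {m : ℕ} (hm : (2 - m % 2, m) ∈ S)
    (hy : 1 ≤ y) (hym : y ≤ m) : (2 - y % 2, y) ∈ S := by
  obtain ⟨k, rfl⟩ := Nat.exists_eq_add_of_le hym
  induction k generalizing y with
  | zero => simpa using hm
  | succ k ih =>
    have hup := ih (y := y + 1) (by omega)
      (by rwa [show y + 1 + k = y + (k + 1) by omega]) (by omega)
    have hstep := hpyr _ _ hup (by omega)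
    rcases Nat.mod_two_eq_zero_or_one y with h | h
    · convert hstep.2 (by omega) using 2 <;> omega
    · convert hstep.1 (by omega) using 2 <;> omega

lemma leftmost_mem_of_right_mem (hQ : Q ⊆ V1 n) (hpyr : Pyramidal n Q) (h12 : i2 n Q ≤ i1 Q)
    (h : (n, y) ∈ Q) : (2 - y % 2, y) ∈ Q := by
  have hny := mem_V1.1 (hQ h)
  rcases (show n = 1 ∨ 2 ≤ n by omega) with rfl | hn
  · rwa [show 2 - y % 2 = 1 by omega]
  have hy : y ≤ i2 n Q :=
    le_sup (f := Prod.snd) (mem_filter.2 ⟨h, rfl⟩ : (n, y) ∈ Q.filter (·.1 = n))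
  have hne : (Q.filter (·.1 = 1)).Nonempty := by
    rw [nonempty_iff_ne_empty]
    intro hc
    simp only [i1, hc, sup_empty, Nat.bot_eq_zero] at h12
    omega
  obtain ⟨⟨x, m⟩, hp, hm⟩ := exists_mem_eq_sup _ hne Prod.snd
  obtain ⟨hpQ, rfl : x = 1⟩ := mem_filter.1 hp
  have := mem_V1.1 (hQ hpQ)
  refine leftmost_mem_of_le hpyr hn ?_ hny.2.2.1 ((hy.trans h12).trans_eq hm)
  rwa [show 2 - m % 2 = 1 by omega]

lemma card_pathNbr_row_leftShift_le (hQ : Q ⊆ V1 n) (hpyr : Pyramidal n Q) (h12 : i2 n Q ≤ i1 Q)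
    (y : ℕ) : #(pathNbr n (row (leftShift n Q) y)) ≤ #(pathNbr n (row Q y)) := by
  rw [row_leftShift hQ]
  exact card_pathNbr_parityPrefix_le (row_subset_Icc hQ) (fun _ => mod_two_of_mem_row hQ)
    (by omega)
    fun h => mem_row.2 (leftmost_mem_of_right_mem hQ hpyr h12 (mem_row.1 h))

lemma pyramidal_leftShift (hQ : Q ⊆ V1 n) (hpyr : Pyramidal n Q) (h12 : i2 n Q ≤ i1 Q) :
    Pyramidal n (leftShift n Q) := by
  rw [pyramidal_iff leftShift_subset_V1]
  intro y hy
  have hcard : #(pathNbr n (row (leftShift n Q) y)) ≤ #(row (leftShift n Q) (y - 1)) :=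
    calc #(pathNbr n (row (leftShift n Q) y))
        ≤ #(pathNbr n (row Q y)) := card_pathNbr_row_leftShift_le hQ hpyr h12 y
      _ ≤ #(row Q (y - 1)) := card_le_card ((pyramidal_iff hQ).1 hpyr y hy)
      _ = #(row (leftShift n Q) (y - 1)) := (card_row_leftShift hQ _).symm
  obtain ⟨m, hm⟩ :=
    exists_pathNbr_parityPrefix_eq (n := n) (b := y % 2) (k := #(row Q y)) (by omega)
  rw [row_leftShift hQ y, hm, row_leftShift hQ (y - 1), show (y - 1) % 2 = 1 - y % 2 by omega]
    at hcard ⊢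
  exact parityPrefix_subset_of_card_le hcard

lemma sub_two_mem_leftShift (hQ : Q ⊆ V1 n) (h : (x, y) ∈ leftShift n Q) (hx : 3 ≤ x) :
    (x - 2, y) ∈ leftShift n Q := by
  rw [← mem_row, row_leftShift hQ] at h ⊢
  simp only [parityPrefix, mem_filter, mem_Icc] at h ⊢
  omega

lemma deltaN_leftShift_le (hQ : Q ⊆ V1 n) (hpyr : Pyramidal n Q) (h12 : i2 n Q ≤ i1 Q) :
    deltaN n (leftShift n Q) ≤ deltaN n Q := by
  have hpyr' := pyramidal_leftShift hQ hpyr h12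
  rw [deltaN_eq_sum_card_row, deltaN_eq_sum_card_row]
  refine sum_le_sum fun y hy => ?_
  obtain ⟨hy1, hyn⟩ := mem_Icc.1 hy
  rcases (show y = 1 ∨ 2 ≤ y by omega) with rfl | hy2
  · rw [row_gridNbr_one leftShift_subset_V1 hpyr', row_gridNbr_one hQ hpyr]
    exact card_pathNbr_row_leftShift_le hQ hpyr h12 1
  · rw [row_gridNbr_of_two_le leftShift_subset_V1 hpyr' hy2 hyn,
      row_gridNbr_of_two_le hQ hpyr hy2 hyn, card_row_leftShift hQ]

end LeftShift

end GridShift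

/-- Let Q ⊆ V₁ be a pyramidal set with i₁(Q) ≥ i₂(Q). Then the set Q' obtained from Q by
the left shifting is left-pyramidal and satisfies δ(Q') ≤ δ(Q). -/
theorem leftShift_leftPyramidal (n : ℕ) (Q : Finset (ℕ × ℕ)) (hQ : Q ⊆ V1 n)
    (hpyr : Pyramidal n Q) (h12 : i2 n Q ≤ i1 Q) :
    LeftPyramidal n (leftShift n Q) ∧ deltaN n (leftShift n Q) ≤ deltaN n Q :=
  ⟨⟨GridShift.pyramidal_leftShift hQ hpyr h12,
      fun _ _ h hx => GridShift.sub_two_mem_leftShift hQ h hx⟩,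
    GridShift.deltaN_leftShift_le hQ hpyr h12⟩
end

section
/- Let G be the (n×n)-grid and let Q ⊆ V_1 be a pyramidal set with i_1(Q) ≤ i_2(Q). Then the set Q' obtained from Q by the right shifting is right-pyramidal and satisfies δ(Q') ≤ δ(Q). -/
/-- A pyramidal set Q is right-pyramidal if (x,y) ∈ Q and x ≤ n-2 imply (x+2, y) ∈ Q. -/
def RightPyramidal (n : ℕ) (Q : Finset (ℕ × ℕ)) : Prop :=
  Pyramidal n Q ∧ ∀ x y : ℕ, (x, y) ∈ Q → x + 2 ≤ n → (x + 2, y) ∈ Q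

/-- The right shifting of Q ⊆ V₁: in each row, the r = |Xᵢ ∩ Q| vertices of Xᵢ ∩ Q are
replaced by the last r vertices x_{ℓ(i)-r+1}ⁱ, ..., x_{ℓ(i)}ⁱ of Xᵢ (by increasing
x-coordinate). A vertex v of V₁ belongs to the shifted set iff its rank from the top of
its row (within V₁) is ≤ r. -/
def rightShift (n : ℕ) (Q : Finset (ℕ × ℕ)) : Finset (ℕ × ℕ) :=
  (gridSet n).filter (fun v => Even (v.1 + v.2) ∧
    ((Xi n v.2).filter (fun u => v.1 ≤ u.1)).card ≤ (Q ∩ Xi n v.2).card)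

/-!
Work one row at a time, with `S = Q ∩ X_i`, its right shift `T` (the `|S|` rightmost positions of
`X_i`) and `D(·)` the set of horizontal neighbours within the row. Because `T` is a final segment,
`|D(T)| = |T ∖ {n}| + 1`, minus one if `T` reaches `x = 1`; on the other hand
`|D(S)| ≥ |S ∖ {n}|`, plus one as soon as `S` has a gap or misses `x = 1`. So shifting can only
enlarge `D` when `S` is a proper initial segment of `X_i` containing `x = 1` and `n ∉ X_i`; then
`i₁(Q) ≤ i₂(Q)` and pyramidality, descending the right edge from `(n, i₂(Q))`, put `(n, i ± 1)`
into `Q`, which provides the missing vertex of `N(Q)` (and of `Q ∩ X_{i-1}`).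

All sets involved in `Q'` are final segments of a parity class, and a final segment is contained in
another as soon as it is not larger. Pyramidality of `Q'` is `D(T_y) ⊆ T_{y-1}`, and
`δ(Q') ≤ δ(Q)` holds row by row since `N(Q') ∩ R_i = D(T_i) ∪ T_{i-1} ∪ T_{i+1}`, three final
segments each no larger than `N(Q) ∩ R_i`.
-/

open Finset

section UpperPart

variable {α : Type*} [LinearOrder α]

def IsUpperIn (P A : Finset α) : Prop :=
  A ⊆ P ∧ ∀ ⦃a⦄, a ∈ A → ∀ ⦃b⦄, b ∈ P → a ≤ b → b ∈ A

/-- The `r` largest elements of `P` (all of `P` if `r ≥ #P`). -/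
def upperPart (P : Finset α) (r : ℕ) : Finset α :=
  P.filter fun x => #(P.filter (x ≤ ·)) ≤ r

variable {P A : Finset α} {r : ℕ}

lemma upperPart_subset : upperPart P r ⊆ P := filter_subset _ _

lemma isUpperIn_upperPart : IsUpperIn P (upperPart P r) := by
  refine ⟨upperPart_subset, fun a ha b hb hab => mem_filter.2 ⟨hb, ?_⟩⟩
  refine le_trans (card_le_card fun u hu => ?_) (mem_filter.1 ha).2
  rw [mem_filter] at hu ⊢
  exact ⟨hu.1, hab.trans hu.2⟩

lemma subset_upperPart (hA : IsUpperIn P A) (hr : #A ≤ r) : A ⊆ upperPart P r := by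
  intro x hx
  refine mem_filter.2 ⟨hA.1 hx, le_trans (card_le_card fun u hu => ?_) hr⟩
  rw [mem_filter] at hu
  exact hA.2 hx hu.1 hu.2

lemma card_upperPart_le : #(upperPart P r) ≤ r := by
  obtain h | hne := (upperPart P r).eq_empty_or_nonempty
  · simp [h]
  have hm := min'_mem _ hne
  have h : upperPart P r = P.filter ((upperPart P r).min' hne ≤ ·) := by
    ext x
    refine ⟨fun hx => mem_filter.2 ⟨upperPart_subset hx, min'_le _ _ hx⟩, fun hx => ?_⟩
    rw [mem_filter] at hx
    exact isUpperIn_upperPart.2 hm hx.1 hx.2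
  calc #(upperPart P r) = #(P.filter ((upperPart P r).min' hne ≤ ·)) := congrArg card h
    _ ≤ r := (mem_filter.1 hm).2

lemma upperPart_zero : upperPart P 0 = ∅ :=
  filter_false_of_mem fun _ hx h =>
    card_ne_zero_of_mem (mem_filter.2 ⟨hx, le_rfl⟩) (Nat.le_zero.1 h)

lemma upperPart_eq_self (hr : #P ≤ r) : upperPart P r = P :=
  filter_true_of_mem fun _ _ => (card_filter_le _ _).trans hr

lemma upperPart_nonempty (hP : P.Nonempty) (hr : 1 ≤ r) : (upperPart P r).Nonempty := by
  refine ⟨P.max' hP, mem_filter.2 ⟨max'_mem _ _, le_trans (card_le_one.2 fun a ha b hb => ?_) hr⟩⟩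
  rw [mem_filter] at ha hb
  exact ((le_max' _ _ ha.1).antisymm ha.2).trans ((le_max' _ _ hb.1).antisymm hb.2).symm

end UpperPart

section Row

/-- The x-coordinates of `X_i`. -/
def rowV1 (n i : ℕ) : Finset ℕ := (Icc 1 n).filter fun x => (x + i) % 2 = 0

def horizNbr (n : ℕ) (S : Finset ℕ) : Finset ℕ := (Icc 1 n).filter fun z => z - 1 ∈ S ∨ z + 1 ∈ S

variable {n i : ℕ} {S T M : Finset ℕ}

lemma mem_rowV1 {x : ℕ} : x ∈ rowV1 n i ↔ 1 ≤ x ∧ x ≤ n ∧ (x + i) % 2 = 0 := by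
  simp [rowV1, and_assoc]

lemma rowV1_congr {j : ℕ} (h : i % 2 = j % 2) : rowV1 n i = rowV1 n j :=
  filter_congr fun x _ => by omega

lemma mem_horizNbr {z : ℕ} : z ∈ horizNbr n S ↔ 1 ≤ z ∧ z ≤ n ∧ (z - 1 ∈ S ∨ z + 1 ∈ S) := by
  simp [horizNbr, and_assoc]

lemma horizNbr_empty : horizNbr n ∅ = ∅ := by
  simp [horizNbr]

lemma image_succ_erase_subset_horizNbr (hS : S ⊆ Icc 1 n) :
    (S.erase n).image (· + 1) ⊆ horizNbr n S := by
  simp only [subset_iff, mem_image, mem_erase, mem_horizNbr]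
  rintro _ ⟨a, ⟨han, ha⟩, rfl⟩
  have := mem_Icc.1 (hS ha)
  exact ⟨by omega, by omega, Or.inl (by simpa using ha)⟩

lemma card_erase_le_card_horizNbr (hS : S ⊆ Icc 1 n) : #(S.erase n) ≤ #(horizNbr n S) :=
  (card_image_of_injective _ (add_left_injective 1)).symm.le.trans
    (card_le_card (image_succ_erase_subset_horizNbr hS))

lemma card_erase_lt_of_image_succ_subset {z : ℕ} (hM : (S.erase n).image (· + 1) ⊆ M)
    (hz : z ∈ M) (hzS : z - 1 ∉ S) : #(S.erase n) < #M := by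
  have hz' : z ∉ (S.erase n).image (· + 1) := by
    simp only [mem_image, mem_erase, not_exists, not_and]
    intro a ha h
    exact hzS (by rw [← h, Nat.add_sub_cancel]; exact ha.2)
  calc #(S.erase n) = #((S.erase n).image (· + 1)) :=
        (card_image_of_injective _ (add_left_injective 1)).symm
    _ < #M := card_lt_card ((ssubset_insert hz').trans_le (insert_subset hz hM))

lemma card_erase_lt_card_horizNbr {g : ℕ} (hS : S ⊆ Icc 1 n) (hg : g ∉ S) (hg2 : g + 2 ∈ S) :
    #(S.erase n) < #(horizNbr n S) := by
  have := mem_Icc.1 (hS hg2)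
  exact card_erase_lt_of_image_succ_subset (image_succ_erase_subset_horizNbr hS)
    (mem_horizNbr.2 ⟨by omega, by omega, Or.inr hg2⟩) (by simpa using hg)

lemma exists_gap {a b : ℕ} (ha : a ∉ S) (hb : b ∈ S) (hab : a ≤ b) (hpar : a % 2 = b % 2) :
    ∃ g ∉ S, g + 2 ∈ S := by
  obtain ⟨k, rfl⟩ : ∃ k, b = a + 2 * k := ⟨(b - a) / 2, by omega⟩
  induction k generalizing a with
  | zero => exact absurd hb ha
  | succ k ih =>
    by_cases ha2 : a + 2 ∈ S
    · exact ⟨a, ha, ha2⟩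
    · exact ih ha2 (by rwa [show a + 2 + 2 * k = a + 2 * (k + 1) by ring]) (by omega) (by omega)

lemma IsUpperIn.horizNbr (hT : IsUpperIn (rowV1 n i) T) :
    IsUpperIn (rowV1 n (i + 1)) (horizNbr n T) := by
  have hTr : ∀ {x}, x ∈ T → 1 ≤ x ∧ x ≤ n ∧ (x + i) % 2 = 0 := fun hx => mem_rowV1.1 (hT.1 hx)
  refine ⟨fun z hz => ?_, fun a ha b hb hab => ?_⟩
  · obtain ⟨hz1, hzn, hzT | hzT⟩ := mem_horizNbr.1 hz <;>
      exact mem_rowV1.2 ⟨hz1, hzn, by have := hTr hzT; omega⟩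
  obtain ⟨ha1, han, haT⟩ := mem_horizNbr.1 ha
  obtain ⟨hb1, hbn, hbp⟩ := mem_rowV1.1 hb
  obtain ⟨w, hwT, hwa⟩ : ∃ w ∈ T, w ≤ a + 1 := haT.elim (⟨_, ·, by omega⟩) (⟨_, ·, le_rfl⟩)
  have hw := hTr hwT
  obtain rfl | hab := hab.eq_or_lt
  · exact ha
  by_cases hbn' : b + 1 ≤ n
  · exact mem_horizNbr.2 ⟨hb1, hbn, Or.inr (hT.2 hwT (mem_rowV1.2 ⟨by omega, hbn', by omega⟩)
      (by omega))⟩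
  · exact mem_horizNbr.2 ⟨hb1, hbn, Or.inl (hT.2 hwT (mem_rowV1.2 ⟨by omega, by omega, by omega⟩)
      (by omega))⟩

lemma horizNbr_subset_insert (hT : IsUpperIn (rowV1 n i) T) (hne : T.Nonempty) :
    horizNbr n T ⊆ insert (T.min' hne - 1) ((T.erase n).image (· + 1)) := by
  intro z hz
  obtain ⟨hz1, hzn, hzT⟩ := mem_horizNbr.1 hz
  have hmin := mem_rowV1.1 (hT.1 (min'_mem T hne))
  simp only [mem_insert, mem_image, mem_erase]
  refine or_iff_not_imp_left.2 fun hzm => ⟨z - 1, ⟨by omega, ?_⟩, by omega⟩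
  refine hzT.elim id fun h => hT.2 (min'_mem T hne) (mem_rowV1.2 ⟨?_, ?_, ?_⟩) ?_
  all_goals have := mem_rowV1.1 (hT.1 h); have := min'_le T _ h; omega

lemma card_horizNbr_le (hT : IsUpperIn (rowV1 n i) T) (hne : T.Nonempty) :
    #(horizNbr n T) ≤ #(T.erase n) + 1 :=
  (card_le_card (horizNbr_subset_insert hT hne)).trans <| (card_insert_le _ _).trans <|
    by rw [card_image_of_injective _ (add_left_injective 1)]

lemma card_horizNbr_le_of_one_mem (hT : IsUpperIn (rowV1 n i) T) (h1 : 1 ∈ T) :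
    #(horizNbr n T) ≤ #(T.erase n) := by
  have hne : T.Nonempty := ⟨1, h1⟩
  have hmin : T.min' hne = 1 :=
    le_antisymm (min'_le T 1 h1) (mem_rowV1.1 (hT.1 (min'_mem T hne))).1
  have hsub : horizNbr n T ⊆ (T.erase n).image (· + 1) := fun z hz => by
    have := horizNbr_subset_insert hT hne hz
    rw [hmin, mem_insert] at this
    exact this.resolve_left fun h => by have := (mem_horizNbr.1 hz).1; omega
  exact (card_le_card hsub).trans (card_image_of_injective _ (add_left_injective 1)).le

end Row

section KeyBound

variable {n i : ℕ} {S M : Finset ℕ}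

/-- The extra element of `M` is `g + 1` for a gap `g ∉ S`, `g + 2 ∈ S` (such as
`g = min S - 2` when `1 ∉ S`), or else the corner `n`. -/
lemma card_erase_lt_of_corner (hS : S ⊆ rowV1 n i) (hSne : S.Nonempty)
    (hM : horizNbr n S ⊆ M) (hcorner : 1 ∈ S → n ∉ rowV1 n i → n ∈ M)
    (hfull : 1 ∈ S → ¬ rowV1 n i ⊆ S) (hn : n ∈ rowV1 n i → n ∈ S) : #(S.erase n) < #M := by
  have hSIcc : S ⊆ Icc 1 n := hS.trans (filter_subset _ _)
  have hpar : ∀ {x}, x ∈ S → (x + i) % 2 = 0 := fun hx => (mem_rowV1.1 (hS hx)).2.2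
  suffices (∃ g ∉ S, g + 2 ∈ S) ∨ (n ∈ M ∧ n - 1 ∉ S) by
    obtain ⟨g, hg, hg2⟩ | ⟨hnM, hn1⟩ := this
    · exact (card_erase_lt_card_horizNbr hSIcc hg hg2).trans_le (card_le_card hM)
    · exact card_erase_lt_of_image_succ_subset
        ((image_succ_erase_subset_horizNbr hSIcc).trans hM) hnM hn1
  by_cases h1S : 1 ∈ S
  · obtain ⟨a, haP, haS⟩ := not_subset.1 (hfull h1S)
    obtain ⟨ha1, han, hap⟩ := mem_rowV1.1 haP
    by_cases hnP : n ∈ rowV1 n i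
    · exact .inl (exists_gap haS (hn hnP) han (by have := (mem_rowV1.1 hnP).2.2; omega))
    by_cases hn1 : n - 1 ∈ S
    · have : a ≠ n := fun h => hnP (h ▸ haP)
      exact .inl (exists_gap haS hn1 (by omega) (by have := hpar hn1; omega))
    · exact .inr ⟨hcorner h1S hnP, hn1⟩
  · have hm := min'_mem S hSne
    have := mem_Icc.1 (hSIcc hm)
    have hm1 : S.min' hSne ≠ 1 := fun h => h1S (h ▸ hm)
    refine .inl ⟨S.min' hSne - 2, fun h => ?_, by rwa [Nat.sub_add_cancel (by omega)]⟩
    have := min'_le S _ h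
    omega

theorem card_horizNbr_upperPart_le (hS : S ⊆ rowV1 n i) (hM : horizNbr n S ⊆ M)
    (hcorner : 1 ∈ S → n ∉ rowV1 n i → n ∈ M) :
    #(horizNbr n (upperPart (rowV1 n i) #S)) ≤ #M := by
  set T := upperPart (rowV1 n i) #S
  obtain rfl | hSne := S.eq_empty_or_nonempty
  · simp [T, upperPart_zero, horizNbr_empty]
  have hT : IsUpperIn (rowV1 n i) T := isUpperIn_upperPart
  have hTne : T.Nonempty := upperPart_nonempty (hSne.mono hS) hSne.card_pos
  have hTS : #T ≤ #S := card_upperPart_le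
  have hnT : n ∈ rowV1 n i → n ∈ T := fun hn =>
    let ⟨_, ht⟩ := hTne
    hT.2 ht hn (mem_rowV1.1 (hT.1 ht)).2.1
  have hSM : #(S.erase n) ≤ #M :=
    (card_erase_le_card_horizNbr (hS.trans (filter_subset _ _))).trans (card_le_card hM)
  have hTS' : #(T.erase n) ≤ #(S.erase n) := by
    by_cases hnS : n ∈ S
    · rw [card_erase_of_mem hnS, card_erase_of_mem (hnT (hS hnS))]
      omega
    · exact (card_erase_le).trans (by rwa [erase_eq_of_notMem hnS])
  by_cases h1T : 1 ∈ T
  · exact (card_horizNbr_le_of_one_mem hT h1T).trans (hTS'.trans hSM)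
  refine (card_horizNbr_le hT hTne).trans ?_
  by_cases hn : n ∈ rowV1 n i ∧ n ∉ S
  · have hT' := card_erase_of_mem (hnT hn.1)
    rw [erase_eq_of_notMem hn.2] at hSM
    have := hTne.card_pos
    omega
  have hfull : 1 ∈ S → ¬ rowV1 n i ⊆ S := fun h1S hPS =>
    h1T <| show 1 ∈ upperPart _ _ by rw [upperPart_eq_self (card_le_card hPS)]; exact hS h1S
  have := card_erase_lt_of_corner hS hSne hM hcorner hfull (fun hnP => by tauto)
  omega

end KeyBound

section Grid

def rowOf (Q : Finset (ℕ × ℕ)) (i : ℕ) : Finset ℕ := (Q.filter (·.2 = i)).image Prod.fst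

variable {n i x : ℕ} {Q T : Finset (ℕ × ℕ)}

@[simp]
lemma mem_rowOf : x ∈ rowOf Q i ↔ (x, i) ∈ Q := by
  simp [rowOf]

lemma card_rowOf : #(rowOf Q i) = #(Q.filter (·.2 = i)) :=
  card_image_of_injOn fun _ hp _ hq h =>
    Prod.ext h ((mem_filter.1 hp).2.trans (mem_filter.1 hq).2.symm)

lemma mem_V1 {p : ℕ × ℕ} :
    p ∈ V1 n ↔ 1 ≤ p.1 ∧ p.1 ≤ n ∧ 1 ≤ p.2 ∧ p.2 ≤ n ∧ (p.1 + p.2) % 2 = 0 := by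
  simp [V1, gridSet, Nat.even_iff, and_assoc]

lemma rowOf_subset_rowV1 (hQ : Q ⊆ V1 n) : rowOf Q i ⊆ rowV1 n i := fun x hx => by
  have := mem_V1.1 (hQ (mem_rowOf.1 hx))
  exact mem_rowV1.2 ⟨this.1, this.2.1, this.2.2.2.2⟩

lemma rightShift_subset_V1 : rightShift n Q ⊆ V1 n := fun p hp => by
  simp only [rightShift, V1, mem_filter] at hp ⊢
  exact ⟨hp.1, hp.2.1⟩

lemma card_filter_Xi (hi : 1 ≤ i) (hin : i ≤ n) :
    #((Xi n i).filter (x ≤ ·.1)) = #((rowV1 n i).filter (x ≤ ·)) := by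
  have : (Xi n i).filter (x ≤ ·.1) = ((rowV1 n i).filter (x ≤ ·)).image (·, i) := by
    ext ⟨u, j⟩
    simp only [Xi, mem_filter, mem_V1, mem_image, mem_rowV1, Prod.mk.injEq, ↓existsAndEq,
      true_and]
    omega
  rw [this, card_image_of_injective _ (Prod.mk_left_injective i)]

lemma card_inter_Xi (hQ : Q ⊆ V1 n) : #(Q ∩ Xi n i) = #(rowOf Q i) := by
  rw [card_rowOf, Xi, inter_filter, inter_eq_left.2 hQ]

lemma rowOf_rightShift (hQ : Q ⊆ V1 n) (i : ℕ) :
    rowOf (rightShift n Q) i = upperPart (rowV1 n i) #(rowOf Q i) := by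
  by_cases hi : 1 ≤ i ∧ i ≤ n
  · ext x
    simp only [mem_rowOf, rightShift, mem_filter, upperPart, gridSet, mem_product, mem_Icc,
      mem_rowV1, Nat.even_iff, card_filter_Xi hi.1 hi.2, card_inter_Xi hQ]
    tauto
  · have hQi : rowOf Q i = ∅ := eq_empty_of_forall_notMem fun x hx => by
      have := mem_V1.1 (hQ (mem_rowOf.1 hx)); omega
    rw [hQi, card_empty, upperPart_zero]
    refine eq_empty_of_forall_notMem fun x hx => ?_
    have := mem_V1.1 (rightShift_subset_V1 (mem_rowOf.1 hx))
    omega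

lemma gridAdj_iff_s9 {a b c d : ℕ} : gridAdj (a, b) (c, d) ↔
    (a = c ∧ (b = d + 1 ∨ d = b + 1)) ∨ (b = d ∧ (a = c + 1 ∨ c = a + 1)) := by
  simp only [gridAdj, Int.abs_eq_natAbs]
  omega

lemma rowOf_gridNbr (hT : T ⊆ V1 n) (hi : 1 ≤ i) (hin : i ≤ n) :
    rowOf (gridNbr n T) i = horizNbr n (rowOf T i) ∪ rowOf T (i - 1) ∪ rowOf T (i + 1) := by
  ext z
  have hV : ∀ {a b}, (a, b) ∈ T → 1 ≤ a ∧ a ≤ n ∧ 1 ≤ b ∧ b ≤ n ∧ (a + b) % 2 = 0 :=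
    fun h => mem_V1.1 (hT h)
  simp only [mem_rowOf, gridNbr, mem_filter, gridSet, mem_product, mem_Icc, mem_union,
    mem_horizNbr]
  constructor
  · rintro ⟨⟨⟨hz1, hzn⟩, -⟩, -, ⟨a, b⟩, hab, hadj⟩
    have := hV hab
    rcases gridAdj_iff_s9.1 hadj with ⟨rfl, rfl | rfl⟩ | ⟨rfl, rfl | rfl⟩
    · exact .inr hab
    · exact .inl (.inr (by simpa using hab))
    · exact .inl (.inl ⟨hz1, hzn, .inr hab⟩)
    · exact .inl (.inl ⟨hz1, hzn, .inl (by simpa using hab)⟩)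
  · rintro ((⟨hz1, hzn, h | h⟩ | h) | h)
    all_goals
      have := hV h
      refine ⟨⟨⟨by omega, by omega⟩, hi, hin⟩, fun hzT => ?_, _, h, gridAdj_iff_s9.2 (by omega)⟩
      have := hV hzT
      omega

lemma deltaN_eq_sum_card_rowOf : deltaN n T = ∑ i ∈ Icc 1 n, #(rowOf (gridNbr n T) i) := by
  rw [deltaN, card_eq_sum_card_fiberwise (f := Prod.snd) (t := Icc 1 n)]
  · simp only [card_rowOf]
  · intro p hp
    exact (mem_product.1 (filter_subset _ _ hp)).2

lemma pyramidal_iff (hT : T ⊆ V1 n) :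
    Pyramidal n T ↔ ∀ y, 2 ≤ y → horizNbr n (rowOf T y) ⊆ rowOf T (y - 1) := by
  constructor
  · intro h y hy z hz
    obtain ⟨hz1, hzn, hzT | hzT⟩ := mem_horizNbr.1 hz
    · simpa [Nat.sub_add_cancel hz1] using (h _ _ (mem_rowOf.1 hzT) hy).2 (by omega)
    · simpa using (h _ _ (mem_rowOf.1 hzT) hy).1 (by omega)
  · intro h x y hxy hy
    have := mem_V1.1 (hT hxy)
    refine ⟨fun hx => mem_rowOf.1 (h y hy (mem_horizNbr.2 ⟨by omega, by omega, .inr ?_⟩)),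
      fun hx => mem_rowOf.1 (h y hy (mem_horizNbr.2 ⟨by omega, hx, .inl (by simpa using hxy)⟩))⟩
    simpa [Nat.sub_add_cancel (by omega : 1 ≤ x)] using hxy

end Grid

section Corner

variable {n : ℕ} {Q : Finset (ℕ × ℕ)}

lemma Pyramidal.mem_of_mem_right_edge (hpyr : Pyramidal n Q) (hn : 2 ≤ n) {y k : ℕ}
    (hy : 1 ≤ y) (h : (n, y + 2 * k) ∈ Q) : (n, y) ∈ Q := by
  induction k with
  | zero => simpa using h
  | succ k ih =>
    have h' := (hpyr _ _ ((hpyr n _ h (by omega)).1 hn) (by omega)).2 (by omega)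
    exact ih (by convert h' using 2 <;> omega)

lemma le_i1 {y : ℕ} (h : (1, y) ∈ Q) : y ≤ i1 Q :=
  le_sup (f := Prod.snd) (show (1, y) ∈ Q.filter (·.1 = 1) from mem_filter.2 ⟨h, rfl⟩)

lemma mem_i2 (h : 0 < i2 n Q) : (n, i2 n Q) ∈ Q := by
  have hne : (Q.filter (·.1 = n)).Nonempty :=
    nonempty_iff_ne_empty.2 fun he => by simp [i2, he] at h
  obtain ⟨p, hp, hps⟩ := exists_mem_eq_sup _ hne Prod.snd
  rw [mem_filter] at hp
  rw [i2, hps, ← hp.2]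
  exact hp.1

/-- `(1, i) ∈ Q` forces `i ≤ i₁(Q) ≤ i₂(Q)`, and pyramidality descends from `(n, i₂(Q))` along
the right edge. -/
lemma Pyramidal.right_mem_rowOf (hpyr : Pyramidal n Q) (hQ : Q ⊆ V1 n) (h12 : i1 Q ≤ i2 n Q)
    {i j : ℕ} (h1 : 1 ∈ rowOf Q i) (hn : n ∉ rowV1 n i) (hj : 1 ≤ j) (hji : j ≤ i + 1)
    (hpar : (i + j) % 2 = 1) : n ∈ rowOf Q j := by
  rw [mem_rowOf] at h1 ⊢
  have hi := mem_V1.1 (hQ h1)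
  have hni : (n + i) % 2 = 1 := by
    by_contra h
    exact hn (mem_rowV1.2 ⟨by omega, le_rfl, by omega⟩)
  have hle := (le_i1 h1).trans h12
  have htop := mem_i2 (n := n) (Q := Q) (by omega)
  have := mem_V1.1 (hQ htop)
  exact hpyr.mem_of_mem_right_edge (k := (i2 n Q - j) / 2) (by omega) hj
    (by convert htop using 2; omega)

end Corner

section RightShift

variable {n : ℕ} {Q : Finset (ℕ × ℕ)}

lemma horizNbr_rowOf_rightShift_subset (hQ : Q ⊆ V1 n) {i : ℕ} {M : Finset ℕ}
    (hM : horizNbr n (rowOf Q i) ⊆ M) (hcorner : 1 ∈ rowOf Q i → n ∉ rowV1 n i → n ∈ M) :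
    horizNbr n (rowOf (rightShift n Q) i) ⊆ upperPart (rowV1 n (i + 1)) #M := by
  rw [rowOf_rightShift hQ]
  exact subset_upperPart isUpperIn_upperPart.horizNbr
    (card_horizNbr_upperPart_le (rowOf_subset_rowV1 hQ) hM hcorner)

lemma pyramidal_rightShift (hQ : Q ⊆ V1 n) (hpyr : Pyramidal n Q) (h12 : i1 Q ≤ i2 n Q) :
    Pyramidal n (rightShift n Q) := by
  refine (pyramidal_iff rightShift_subset_V1).2 fun y hy => ?_
  rw [rowOf_rightShift hQ (y - 1), rowV1_congr (show (y - 1) % 2 = (y + 1) % 2 by omega)]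
  exact horizNbr_rowOf_rightShift_subset hQ ((pyramidal_iff hQ).1 hpyr y hy)
    fun h1 hn => hpyr.right_mem_rowOf hQ h12 h1 hn (by omega) (by omega) (by omega)

lemma add_two_mem_rightShift (hQ : Q ⊆ V1 n) {x y : ℕ} (h : (x, y) ∈ rightShift n Q)
    (hx : x + 2 ≤ n) : (x + 2, y) ∈ rightShift n Q := by
  rw [← mem_rowOf, rowOf_rightShift hQ] at h ⊢
  have := mem_rowV1.1 (upperPart_subset h)
  exact isUpperIn_upperPart.2 h (mem_rowV1.2 ⟨by omega, hx, by omega⟩) (by omega)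

lemma card_rowOf_gridNbr_rightShift_le (hQ : Q ⊆ V1 n) (hpyr : Pyramidal n Q)
    (h12 : i1 Q ≤ i2 n Q) {i : ℕ} (hi : 1 ≤ i) (hin : i ≤ n) :
    #(rowOf (gridNbr n (rightShift n Q)) i) ≤ #(rowOf (gridNbr n Q) i) := by
  set N := rowOf (gridNbr n Q) i
  have hN : N = horizNbr n (rowOf Q i) ∪ rowOf Q (i - 1) ∪ rowOf Q (i + 1) :=
    rowOf_gridNbr hQ hi hin
  have hDN : horizNbr n (rowOf Q i) ⊆ N := hN ▸ subset_union_left.trans subset_union_left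
  have hpredN : rowOf Q (i - 1) ⊆ N := hN ▸ subset_union_right.trans subset_union_left
  have hsuccN : rowOf Q (i + 1) ⊆ N := hN ▸ subset_union_right
  have hvert : ∀ j, j % 2 = (i + 1) % 2 → rowOf Q j ⊆ N →
      rowOf (rightShift n Q) j ⊆ upperPart (rowV1 n (i + 1)) #N := fun j hj hjN => by
    rw [rowOf_rightShift hQ, rowV1_congr hj]
    exact subset_upperPart isUpperIn_upperPart (card_upperPart_le.trans (card_le_card hjN))
  have hhoriz := horizNbr_rowOf_rightShift_subset hQ hDN fun h1 hn =>
    hsuccN (hpyr.right_mem_rowOf hQ h12 h1 hn (by omega) le_rfl (by omega))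
  calc #(rowOf (gridNbr n (rightShift n Q)) i)
      ≤ #(upperPart (rowV1 n (i + 1)) #N) := by
        rw [rowOf_gridNbr rightShift_subset_V1 hi hin]
        exact card_le_card (union_subset (union_subset hhoriz (hvert _ (by omega) hpredN))
          (hvert _ rfl hsuccN))
    _ ≤ #N := card_upperPart_le

end RightShift

/-- Let Q ⊆ V₁ be a pyramidal set with i₁(Q) ≤ i₂(Q). Then the set Q' obtained from Q by
the right shifting is right-pyramidal and satisfies δ(Q') ≤ δ(Q). -/
theorem rightShift_rightPyramidal (n : ℕ) (Q : Finset (ℕ × ℕ)) (hQ : Q ⊆ V1 n)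
    (hpyr : Pyramidal n Q) (h12 : i1 Q ≤ i2 n Q) :
    RightPyramidal n (rightShift n Q) ∧ deltaN n (rightShift n Q) ≤ deltaN n Q := by
  refine ⟨⟨pyramidal_rightShift hQ hpyr h12, fun x y h hx => add_two_mem_rightShift hQ h hx⟩, ?_⟩
  rw [deltaN_eq_sum_card_rowOf, deltaN_eq_sum_card_rowOf]
  exact sum_le_sum fun i hi =>
    card_rowOf_gridNbr_rightShift_le hQ hpyr h12 (mem_Icc.1 hi).1 (mem_Icc.1 hi).2
end

section
/- If k hunters have a winning strategy on an n-vertex graph G with respect to S ⊆ V(G), then they have a finite winning strategy (H_1, ..., H_ℓ) of length ℓ ≤ 2^n, i.e., a sequence of subsets of V(G) each of size at most k such that for every rabbit's strategy with r_0 ∈ S there exists i ∈ {1,...,ℓ} with r_{i-1} ∈ H_i. -/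
section Aux

open Classical in
/-- The set of possible positions of a rabbit that has survived shots `Hs 0, ..., Hs i`. -/
noncomputable def Rset {V : Type*} [Fintype V] (G : SimpleGraph V) (S : Set V)
    (Hs : ℕ → Finset V) : ℕ → Finset V
  | 0 => S.toFinset \ Hs 0
  | (i+1) => (Finset.univ.filter fun v => ∃ u ∈ Rset G S Hs i, G.Adj u v) \ Hs (i+1)

variable {V : Type*} [Fintype V] (G : SimpleGraph V) (S : Set V) (Hs : ℕ → Finset V)

lemma Rset_zero : ∀ v, v ∈ Rset G S Hs 0 ↔ v ∈ S ∧ v ∉ Hs 0 := by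
  classical
  intro v
  simp [Rset]

lemma Rset_succ : ∀ v i, v ∈ Rset G S Hs (i+1) ↔
    (∃ u ∈ Rset G S Hs i, G.Adj u v) ∧ v ∉ Hs (i+1) := by
  classical
  intro v i
  simp [Rset]

open Classical in
lemma Rset_succ_def (i : ℕ) : Rset G S Hs (i+1) =
    (Finset.univ.filter fun v => ∃ u ∈ Rset G S Hs i, G.Adj u v) \ Hs (i+1) := rfl

lemma Rset_not_shot {v : V} {i : ℕ} (hv : v ∈ Rset G S Hs i) : v ∉ Hs i := by
  cases i with
  | zero => exact ((Rset_zero G S Hs v).1 hv).2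
  | succ i => exact ((Rset_succ G S Hs v i).1 hv).2

/-- Completeness: a surviving rabbit is in the `Rset`. -/
lemma mem_Rset_of_survive (r : ℕ → V) (hr : RabbitStrategy G r) (h0 : r 0 ∈ S) :
    ∀ i, (∀ j ≤ i, r j ∉ Hs j) → r i ∈ Rset G S Hs i := by
  intro i
  induction i with
  | zero => intro hs; exact (Rset_zero G S Hs _).2 ⟨h0, hs 0 le_rfl⟩
  | succ i ih =>
      intro hs
      refine (Rset_succ G S Hs _ i).2 ⟨⟨r i, ih (fun j hj => hs j (hj.trans (Nat.le_succ i))),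
        hr i⟩, hs (i+1) le_rfl⟩

/-- Soundness of the back-tracking: a walk through the `Rset`s. -/
def Wseq (i m : ℕ) (f : ℕ → V) : Prop :=
  (∀ j < m, G.Adj (f j) (f (j+1))) ∧ (∀ j ≤ m, f j ∈ Rset G S Hs (i + j))

lemma Wseq_mono {i m m' : ℕ} {f : ℕ → V} (h : Wseq G S Hs i m f) (hm : m' ≤ m) :
    Wseq G S Hs i m' f :=
  ⟨fun j hj => h.1 j (hj.trans_le hm), fun j hj => h.2 j (hj.trans hm)⟩

lemma Wseq_back : ∀ (m i : ℕ) (v : V), v ∈ Rset G S Hs (i + m) →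
    ∃ f, Wseq G S Hs i m f ∧ f m = v := by
  intro m
  induction m with
  | zero =>
      intro i v hv
      exact ⟨fun _ => v, ⟨fun j hj => absurd hj (Nat.not_lt_zero j),
        fun j hj => by simpa [Nat.le_zero.1 hj] using hv⟩, rfl⟩
  | succ m ih =>
      intro i v hv
      obtain ⟨⟨u, hu, hadj⟩, -⟩ := (Rset_succ G S Hs v (i + m)).1 hv
      obtain ⟨f, hf, hfm⟩ := ih i u hu
      refine ⟨fun j => if j ≤ m then f j else v, ⟨?_, ?_⟩, by simp⟩
      · intro j hj
        rcases Nat.lt_succ_iff_lt_or_eq.1 hj with hj | rfl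
        · simpa [Nat.le_of_lt hj, Nat.succ_le_of_lt hj] using hf.1 j hj
        · simpa [hfm] using hadj
      · intro j hj
        rcases Nat.le_succ_iff.1 hj with hj | rfl
        · simpa [hj] using hf.2 j hj
        · simpa using hv

/-- A vertex from which arbitrarily long surviving walks exist. -/
def ExtV (i : ℕ) (v : V) : Prop := ∀ m, ∃ f, Wseq G S Hs i m f ∧ f 0 = v

lemma pigeonhole {Q : ℕ → V → Prop} (hmono : ∀ {m m' v}, Q m v → m' ≤ m → Q m' v)
    (hex : ∀ m, ∃ v, Q m v) : ∃ v, ∀ m, Q m v := by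
  choose g hg using hex
  obtain ⟨v, hv⟩ := Finite.exists_infinite_fiber g
  rw [Set.infinite_coe_iff] at hv
  refine ⟨v, fun m => ?_⟩
  obtain ⟨b, hb, hmb⟩ := hv.exists_gt m
  have : g b = v := hb
  exact hmono (this ▸ hg b) hmb.le

lemma ExtV_zero (hne : ∀ i, (Rset G S Hs i).Nonempty) : ∃ v, ExtV G S Hs 0 v := by
  refine pigeonhole (Q := fun m v => ∃ f, Wseq G S Hs 0 m f ∧ f 0 = v) ?_ ?_
  · rintro m m' v ⟨f, hf, hf0⟩ hm
    exact ⟨f, Wseq_mono G S Hs hf hm, hf0⟩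
  · intro m
    obtain ⟨v, hv⟩ := hne m
    obtain ⟨f, hf, -⟩ := Wseq_back G S Hs m 0 v (by simpa using hv)
    exact ⟨f 0, f, hf, rfl⟩

lemma ExtV_step {i : ℕ} {v : V} (hv : ExtV G S Hs i v) :
    ∃ w, G.Adj v w ∧ ExtV G S Hs (i+1) w := by
  have := pigeonhole (Q := fun m w => G.Adj v w ∧ ∃ f, Wseq G S Hs (i+1) m f ∧ f 0 = w)
    ?_ ?_
  · obtain ⟨w, hw⟩ := this
    exact ⟨w, (hw 0).1, fun m => (hw m).2⟩
  · rintro m m' w ⟨hadj, f, hf, hf0⟩ hm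
    exact ⟨hadj, f, Wseq_mono G S Hs hf hm, hf0⟩
  · intro m
    obtain ⟨f, hf, hf0⟩ := hv (m + 1)
    refine ⟨f 1, ⟨hf0 ▸ hf.1 0 (Nat.succ_pos m), fun j => f (j + 1), ⟨?_, ?_⟩, rfl⟩⟩
    · intro j hj
      exact hf.1 (j+1) (by omega)
    · intro j hj
      have := hf.2 (j+1) (by omega)
      convert this using 2
      omega

lemma dep_choice {P : ℕ → V → Prop} (h0 : ∃ v, P 0 v)
    (hstep : ∀ i v, P i v → ∃ w, G.Adj v w ∧ P (i + 1) w) :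
    ∃ r : ℕ → V, RabbitStrategy G r ∧ ∀ i, P i (r i) := by
  choose f hf1 hf2 using hstep
  obtain ⟨v0, hv0⟩ := h0
  let g : (i : ℕ) → {v : V // P i v} := fun i =>
    Nat.rec ⟨v0, hv0⟩ (fun i p => ⟨f i p.1 p.2, hf2 i p.1 p.2⟩) i
  exact ⟨fun i => (g i).1, fun i => hf1 i (g i).1 (g i).2, fun i => (g i).2⟩

/-- If the strategy wins, some `Rset` is eventually empty. -/
lemma exists_Rset_empty
    (hwin : ∀ r : ℕ → V, RabbitStrategy G r → r 0 ∈ S → ∃ i, r i ∈ Hs i) :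
    ∃ ℓ, Rset G S Hs ℓ = ∅ := by
  by_contra hne
  push_neg at hne
  obtain ⟨r, hr, hrP⟩ := dep_choice G (P := ExtV G S Hs) (ExtV_zero G S Hs hne)
    (fun i v hv => ExtV_step G S Hs hv)
  have hmem : ∀ i, r i ∈ Rset G S Hs i := by
    intro i
    obtain ⟨f, hf, hf0⟩ := hrP i 0
    simpa [hf0] using hf.2 0 le_rfl
  obtain ⟨i, hi⟩ := hwin r hr ((Rset_zero G S Hs (r 0)).1 (hmem 0)).1
  exact Rset_not_shot G S Hs (hmem i) hi

/-- `Rset` only depends on the initial segment of the strategy. -/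
lemma Rset_congr {Hs' : ℕ → Finset V} : ∀ t, (∀ s ≤ t, Hs' s = Hs s) →
    Rset G S Hs' t = Rset G S Hs t := by
  intro t
  induction t with
  | zero => intro h; simp [Rset, h 0 le_rfl]
  | succ t ih =>
      intro h
      rw [Rset_succ_def, Rset_succ_def, ih (fun s hs => h s (hs.trans (Nat.le_succ t))),
        h (t+1) le_rfl]

/-- Trimming: any winning strategy can be shortened to one emptying within `2 ^ n` steps. -/
lemma trim (k n : ℕ) (hn : Fintype.card V = n) :
    ∀ ℓ : ℕ, ∀ Hs : ℕ → Finset V, (∀ i, (Hs i).card ≤ k) → Rset G S Hs ℓ = ∅ →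
    ∃ (ℓ' : ℕ) (Hs' : ℕ → Finset V), ℓ' + 1 ≤ 2 ^ n ∧ (∀ i, (Hs' i).card ≤ k) ∧
      Rset G S Hs' ℓ' = ∅ := by
  intro ℓ
  induction ℓ using Nat.strong_induction_on with
  | _ ℓ IH =>
    intro Hs hk hempty
    by_cases hℓ : ℓ + 1 ≤ 2 ^ n
    · exact ⟨ℓ, Hs, hℓ, hk, hempty⟩
    · have h2n : 2 ^ n ≤ ℓ := by omega
      have hcard : (Finset.univ : Finset (Finset V)).card < (Finset.range (2 ^ n + 1)).card := by
        rw [Finset.card_range, Finset.card_univ, Fintype.card_finset, hn]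
        omega
      obtain ⟨a, ha, b, hb, hab, heq⟩ :=
        Finset.exists_ne_map_eq_of_card_lt_of_maps_to hcard
          (f := fun t => Rset G S Hs t) (fun a _ => Finset.mem_univ _)
      simp only [Finset.mem_range] at ha hb
      -- WLOG a < b
      obtain ⟨i, j, hij, hji, hRij⟩ : ∃ i j, i < j ∧ j ≤ 2 ^ n ∧
          Rset G S Hs i = Rset G S Hs j := by
        rcases lt_or_gt_of_ne hab with hlt | hlt
        · exact ⟨a, b, hlt, by omega, heq⟩
        · exact ⟨b, a, hlt, by omega, heq.symm⟩
      set d := j - i with hd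
      have hd1 : 1 ≤ d := by omega
      set Hs' : ℕ → Finset V := fun t => if t ≤ i then Hs t else Hs (t + d) with hHs'
      have hshift : ∀ t, i ≤ t → Rset G S Hs' t = Rset G S Hs (t + d) := by
        intro t ht
        induction t, ht using Nat.le_induction with
        | base =>
            have : Rset G S Hs' i = Rset G S Hs i :=
              Rset_congr G S Hs i (fun s hs => by simp [hHs', hs])
            rw [this, hRij]
            congr 1
            omega
        | succ t ht iht =>
            have h1 : Hs' (t + 1) = Hs (t + 1 + d) := by
              simp only [hHs', if_neg (by omega : ¬ t + 1 ≤ i)]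
            have h2 : t + 1 + d = t + d + 1 := by omega
            rw [Rset_succ_def, h1, iht, h2, Rset_succ_def]
      have hempty' : Rset G S Hs' (ℓ - d) = ∅ := by
        have : ℓ - d + d = ℓ := by omega
        rw [hshift (ℓ - d) (by omega), this, hempty]
      exact IH (ℓ - d) (by omega) Hs'
        (fun t => by by_cases h : t ≤ i <;> simp [hHs', h, hk]) hempty'

end Aux

/-- If k hunters have a winning strategy on an n-vertex graph G with respect to S, then
they have a finite winning strategy (H₁, ..., H_ℓ) of length ℓ ≤ 2ⁿ: a sequence of subsets
of V(G) of size at most k such that every rabbit starting in S is shot within the first ℓ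
rounds. -/
theorem finite_winning_strategy {V : Type*} [Fintype V] (G : SimpleGraph V) (k n : ℕ)
    (hn : Fintype.card V = n) (S : Set V) (h : HuntersWinWrt G k S) :
    ∃ (ℓ : ℕ) (Hs : ℕ → Finset V), ℓ ≤ 2 ^ n ∧ (∀ i, (Hs i).card ≤ k) ∧
      ∀ r : ℕ → V, RabbitStrategy G r → r 0 ∈ S → ∃ i < ℓ, r i ∈ Hs i := by
  obtain ⟨Hs, hk, hwin⟩ := h
  obtain ⟨ℓ, hempty⟩ := exists_Rset_empty G S Hs hwin
  obtain ⟨ℓ', Hs', hℓ', hk', hempty'⟩ := trim G S k n hn ℓ Hs hk hempty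
  refine ⟨ℓ' + 1, Hs', hℓ', hk', fun r hr h0 => ?_⟩
  by_contra hc
  push_neg at hc
  have : r ℓ' ∈ Rset G S Hs' ℓ' :=
    mem_Rset_of_survive G S Hs' r hr h0 ℓ' (fun j hj => hc j (by omega))
  simp [hempty'] at this
end

section
/- Let G be a bipartite graph and let (V_1, V_2) be a bipartition of V(G). Then k hunters have a winning strategy on G if and only if k hunters have a winning strategy on G with respect to V_1. -/
/-- Compactness: on a finite vertex set, a winning strategy catches every rabbit within
some uniform time bound. -/
lemma exists_catch_bound {V : Type*} [Fintype V] (G : SimpleGraph V) (S : Set V)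
    (Hs : ℕ → Finset V)
    (hwin : ∀ r : ℕ → V, RabbitStrategy G r → r 0 ∈ S → ∃ i, r i ∈ Hs i) :
    ∃ N, ∀ r : ℕ → V, RabbitStrategy G r → r 0 ∈ S → ∃ i ≤ N, r i ∈ Hs i := by
  by_contra h
  push_neg at h
  letI : TopologicalSpace V := ⊥
  haveI : DiscreteTopology V := ⟨rfl⟩
  set C : ℕ → Set (ℕ → V) := fun n =>
    {r | r 0 ∈ S ∧ (∀ i < n, G.Adj (r i) (r (i + 1))) ∧ ∀ i ≤ n, r i ∉ Hs i} with hC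
  have hne : ∀ n, (C n).Nonempty := by
    intro n
    obtain ⟨r, hr, hr0, hi⟩ := h n
    exact ⟨r, hr0, fun i _ => hr i, hi⟩
  have hclosed : ∀ n, IsClosed (C n) := by
    intro n
    have hCn : C n = ({r : ℕ → V | r 0 ∈ S} ∩
        ((⋂ i ∈ Set.Iio n, {r : ℕ → V | G.Adj (r i) (r (i + 1))}) ∩
          ⋂ i ∈ Set.Iic n, {r : ℕ → V | r i ∉ Hs i})) := by
      ext r
      simp only [hC, Set.mem_setOf_eq, Set.mem_inter_iff, Set.mem_iInter, Set.mem_Iio,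
        Set.mem_Iic]
    rw [hCn]
    refine IsClosed.inter ?_ (IsClosed.inter ?_ ?_)
    · exact (isClosed_discrete S).preimage (continuous_apply 0)
    · refine isClosed_biInter fun i _ => ?_
      have heq : {r : ℕ → V | G.Adj (r i) (r (i + 1))} =
          (fun r : ℕ → V => (r i, r (i + 1))) ⁻¹' {p : V × V | G.Adj p.1 p.2} := rfl
      rw [heq]
      exact IsClosed.preimage ((continuous_apply i).prodMk (continuous_apply (i + 1)))
        (isClosed_discrete _)
    · refine isClosed_biInter fun i _ => ?_
      have heq : {r : ℕ → V | r i ∉ Hs i} =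
          (fun r : ℕ → V => r i) ⁻¹' {v : V | v ∉ Hs i} := rfl
      rw [heq]
      exact IsClosed.preimage (continuous_apply i) (isClosed_discrete _)
  have hmono : ∀ n, C (n + 1) ⊆ C n := by
    intro n r hr
    exact ⟨hr.1, fun i hi => hr.2.1 i (Nat.lt_succ_of_lt hi),
      fun i hi => hr.2.2 i (Nat.le_succ_of_le hi)⟩
  have hcompact : IsCompact (C 0) := (hclosed 0).isCompact
  obtain ⟨r, hr⟩ := IsCompact.nonempty_iInter_of_sequence_nonempty_isCompact_isClosed
    C hmono hne hcompact hclosed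
  simp only [Set.mem_iInter] at hr
  have hadj : RabbitStrategy G r := fun i => (hr (i + 1)).2.1 i (Nat.lt_succ_self i)
  obtain ⟨i, hi⟩ := hwin r hadj (hr 0).1
  exact (hr i).2.2 i le_rfl hi

/-- Let G be a bipartite graph with bipartition (V₁, V₂). Then k hunters have a winning
strategy on G if and only if k hunters have a winning strategy on G with respect to V₁. -/
theorem bipartite_huntersWin_iff {V : Type*} [Fintype V] (G : SimpleGraph V)
    (V₁ V₂ : Set V) (hunion : V₁ ∪ V₂ = Set.univ) (hdisj : Disjoint V₁ V₂)
    (hbip : ∀ u v : V, G.Adj u v → (u ∈ V₁ ∧ v ∈ V₂) ∨ (u ∈ V₂ ∧ v ∈ V₁)) (k : ℕ) :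
    HuntersWin G k ↔ HuntersWinWrt G k V₁ := by
  constructor
  · rintro ⟨Hs, hcard, hwin⟩
    exact ⟨Hs, hcard, fun r hr _ => hwin r hr (Set.mem_univ _)⟩
  · rintro ⟨Hs, hcard, hwin⟩
    obtain ⟨N, hN⟩ := exists_catch_bound G V₁ Hs hwin
    set T : ℕ := 2 * N + 1 with hT
    have hTN : N < T := by omega
    refine ⟨fun j => if j ≤ N then Hs j else if T ≤ j then Hs (j - T) else ∅, ?_, ?_⟩
    · intro j
      dsimp only
      split_ifs <;> simp [hcard]
    · intro r hr _
      have hcase : r 0 ∈ V₁ ∨ r 0 ∈ V₂ := by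
        have := Set.mem_univ (r 0)
        rw [← hunion] at this
        exact this
      rcases hcase with h0 | h0
      · obtain ⟨i, hiN, hi⟩ := hN r hr h0
        refine ⟨i, ?_⟩
        simp [hiN, hi]
      · -- parity: since r 0 ∈ V₂, at odd times the rabbit is in V₁
        have hpar : ∀ i, (Even i → r i ∈ V₂) ∧ (Odd i → r i ∈ V₁) := by
          intro i
          induction i with
          | zero => exact ⟨fun _ => h0, fun h => absurd h (by simp)⟩
          | succ n ih =>
            constructor
            · intro he
              have hodd : Odd n := by
                rcases Nat.even_or_odd n with h | h
                · exact absurd (by exact h.add_one) (by simpa using he)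
                · exact h
              have h1 := ih.2 hodd
              rcases hbip _ _ (hr n) with ⟨_, h2⟩ | ⟨h2, _⟩
              · exact h2
              · exact absurd h1 (fun hh => hdisj.ne_of_mem hh h2 rfl)
            · intro ho
              have heven : Even n := by
                rcases Nat.even_or_odd n with h | h
                · exact h
                · exact absurd (h.add_one) (by simpa using ho)
              have h1 := ih.1 heven
              rcases hbip _ _ (hr n) with ⟨h2, _⟩ | ⟨_, h2⟩
              · exact absurd h2 (fun hh => hdisj.ne_of_mem hh h1 rfl)
              · exact h2
        have hT1 : r T ∈ V₁ := (hpar T).2 ⟨N, by omega⟩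
        have hrs : RabbitStrategy G (fun i => r (T + i)) := by
          intro i
          simpa [Nat.add_assoc] using hr (T + i)
        obtain ⟨i, _, hi⟩ := hN _ hrs (by simpa using hT1)
        refine ⟨T + i, ?_⟩
        have h1 : ¬ (T + i ≤ N) := by omega
        have h2 : T ≤ T + i := by omega
        simp only [h1, if_false, h2, if_true]
        simpa using hi
end

section
/- For every finite simple graph G, h(G) ≤ pw(G) + 1; more concretely, if (X_1, ..., X_ℓ) is a path decomposition of G of width k, then the sequence (X_1, ..., X_ℓ) itself is a winning hunters' strategy for k+1 hunters, so h(G) ≤ k + 1. -/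
/-- A path decomposition of `G` with bags `X 0, ..., X (ℓ-1)`: the bags cover all vertices,
every edge is contained in some bag, and the bags containing any fixed vertex form an
interval. -/
def IsPathDecomp {V : Type*} (G : SimpleGraph V) (ℓ : ℕ) (X : ℕ → Finset V) : Prop :=
  (∀ v : V, ∃ i < ℓ, v ∈ X i) ∧
  (∀ u v : V, G.Adj u v → ∃ i < ℓ, u ∈ X i ∧ v ∈ X i) ∧
  (∀ (v : V) (i j k : ℕ), i ≤ j → j ≤ k → k < ℓ → v ∈ X i → v ∈ X k → v ∈ X j)

/-- The pathwidth of `G`: the least `w` such that `G` has a path decomposition all of whose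
bags have size at most `w + 1`. -/
noncomputable def pathwidth {V : Type*} (G : SimpleGraph V) : ℕ :=
  sInf {w | ∃ ℓ X, IsPathDecomp G ℓ X ∧ ∀ i < ℓ, (X i).card ≤ w + 1}

/-- For every finite simple graph G, h(G) ≤ pw(G) + 1; more concretely, if (X₁, ..., X_ℓ)
is a path decomposition of G of width k, then the sequence (X₁, ..., X_ℓ) itself is a
winning hunters' strategy for k + 1 hunters, so h(G) ≤ k + 1. -/
theorem hunterNumber_le_pathwidth {V : Type*} [Fintype V] (G : SimpleGraph V) :
    hunterNumber G ≤ pathwidth G + 1 ∧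
    ∀ (ℓ k : ℕ) (X : ℕ → Finset V), IsPathDecomp G ℓ X → (∀ i < ℓ, (X i).card ≤ k + 1) →
      (∀ r : ℕ → V, RabbitStrategy G r → ∃ i < ℓ, r i ∈ X i) ∧
      hunterNumber G ≤ k + 1 := by
  have key : ∀ (ℓ : ℕ) (X : ℕ → Finset V), IsPathDecomp G ℓ X →
      ∀ r : ℕ → V, RabbitStrategy G r → ∃ i < ℓ, r i ∈ X i := by
    intro ℓ X hpd r hr
    by_contra h
    push_neg at h
    obtain ⟨hcov, hedge, hint⟩ := hpd
    have claim : ∀ i, ∀ j < ℓ, r i ∈ X j → i < j := by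
      intro i
      induction i with
      | zero =>
        intro j hj hmem
        rcases Nat.eq_zero_or_pos j with h0 | h0
        · subst h0; exact absurd hmem (h 0 hj)
        · exact h0
      | succ i ih =>
        intro j hj hmem
        obtain ⟨m, hm, hm1, hm2⟩ := hedge _ _ (hr i)
        have him : i < m := ih m hm hm1
        by_contra hji
        push_neg at hji
        exact h (i + 1) (lt_of_le_of_lt him hm)
          (hint _ j (i + 1) m hji him hm hmem hm2)
    obtain ⟨j, hj, hmem⟩ := hcov (r ℓ)
    exact absurd (claim ℓ j hj hmem) (by omega)
  have main : ∀ (ℓ k : ℕ) (X : ℕ → Finset V), IsPathDecomp G ℓ X →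
      (∀ i < ℓ, (X i).card ≤ k + 1) →
      (∀ r : ℕ → V, RabbitStrategy G r → ∃ i < ℓ, r i ∈ X i) ∧
      hunterNumber G ≤ k + 1 := by
    intro ℓ k X hpd hcard
    refine ⟨key ℓ X hpd, ?_⟩
    apply Nat.sInf_le
    refine ⟨fun i => if i < ℓ then X i else ∅, fun i => ?_, fun r hr _ => ?_⟩
    · by_cases hi : i < ℓ
      · simpa [hi] using hcard i hi
      · simp [hi]
    · obtain ⟨i, hi, hmem⟩ := key ℓ X hpd r hr
      exact ⟨i, by simpa [hi] using hmem⟩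
  refine ⟨?_, main⟩
  have hne : {w | ∃ ℓ X, IsPathDecomp G ℓ X ∧ ∀ i < ℓ, (X i).card ≤ w + 1}.Nonempty := by
    refine ⟨Fintype.card V, 1, fun _ => Finset.univ, ⟨?_, ?_, ?_⟩, ?_⟩
    · exact fun v => ⟨0, by omega, Finset.mem_univ v⟩
    · exact fun u v _ => ⟨0, by omega, Finset.mem_univ u, Finset.mem_univ v⟩
    · intro v i j kk _ _ _ _ _; exact Finset.mem_univ v
    · intro i _; simp [Finset.card_univ]
  obtain ⟨ℓ, X, hpd, hcard⟩ := Nat.sInf_mem hne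
  exact (main ℓ (pathwidth G) X hpd hcard).2
end

section
/- For every integer k ≥ 2 there exists a finite simple graph G with pathwidth exactly k and hunter number h(G) = k + 1; that is, the bound h(G) ≤ pw(G) + 1 is tight for graphs of pathwidth at least 2. -/
/-!
The witness is the `k`-th power of the path on `2k + 2` vertices. Its bags `{i, …, i + k}` form
a path decomposition of width `k`, and its clique `{0, …, k}` must fit into a single bag of any
path decomposition, so its pathwidth is `k`. Shooting the bags from left to right is a winning
strategy for `k + 1` hunters, as for every path decomposition. Against `k` hunters, the set of
vertices the rabbit may still occupy never drops below `k + 2` elements: at least two of them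
survive each shot, and for `k ≥ 2` any two distinct vertices have at least `k + 2` neighbours
together. A Kőnig-type compactness argument turns these arbitrarily long escapes into an
infinite one.
-/

open Finset

section PathDecomp

variable {V : Type*} {G : SimpleGraph V} {ℓ : ℕ} {X : ℕ → Finset V}

/-- Helly property of intervals: a clique lies in the bag where its last vertex first appears. -/
theorem IsPathDecomp.exists_bag_superset_of_isClique (hX : IsPathDecomp G ℓ X) {s : Finset V}
    (hs : G.IsClique (s : Set V)) (hne : s.Nonempty) : ∃ i < ℓ, s ⊆ X i := by
  classical
  obtain ⟨hcover, hedge, hinterval⟩ := hX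
  obtain ⟨v₀, hv₀, hmax⟩ := s.exists_max_image (fun v => Nat.find (hcover v)) hne
  obtain ⟨hMℓ, hv₀M⟩ := Nat.find_spec (hcover v₀)
  refine ⟨_, hMℓ, fun v hv => ?_⟩
  rcases eq_or_ne v v₀ with rfl | hvv₀
  · exact hv₀M
  obtain ⟨q, hqℓ, hvq, hv₀q⟩ := hedge v v₀ (hs hv hv₀ hvv₀)
  exact hinterval v _ _ q (hmax v hv) (Nat.find_le ⟨hqℓ, hv₀q⟩) hqℓ
    (Nat.find_spec (hcover v)).2 hvq

theorem pathwidth_eq_of_isPathDecomp_of_isNClique {w : ℕ} (hX : IsPathDecomp G ℓ X)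
    (hXcard : ∀ i < ℓ, (X i).card ≤ w + 1) {s : Finset V} (hs : G.IsNClique (w + 1) s) :
    pathwidth G = w := by
  have hmem : w ∈ {w | ∃ ℓ X, IsPathDecomp G ℓ X ∧ ∀ i < ℓ, (X i).card ≤ w + 1} :=
    ⟨ℓ, X, hX, hXcard⟩
  refine le_antisymm (Nat.sInf_le hmem) (le_csInf ⟨w, hmem⟩ ?_)
  rintro w' ⟨ℓ', X', hX', hX'card⟩
  have hne : s.Nonempty := by rw [← card_pos, hs.card_eq]; omega
  obtain ⟨i, hi, hsX⟩ := hX'.exists_bag_superset_of_isClique hs.isClique hne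
  have := hs.card_eq ▸ card_le_card hsX
  have := hX'card i hi
  omega

/-- Sweeping the bags from left to right: a rabbit that is never shot stays strictly to the
right of the current bag, which is impossible once the last bag has been shot. -/
theorem huntersWin_of_isPathDecomp {k : ℕ} (hX : IsPathDecomp G ℓ X)
    (hXcard : ∀ i < ℓ, (X i).card ≤ k) : HuntersWin G k := by
  classical
  obtain ⟨hcover, hedge, hinterval⟩ := hX
  refine ⟨fun i => if i < ℓ then X i else ∅, fun i => ?_, fun r hr _ => ?_⟩
  · dsimp only
    split_ifs with hi
    exacts [hXcard i hi, by simp]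
  by_contra! hsafe
  have hshot : ∀ i < ℓ, r i ∉ X i := fun i hi => by simpa [hi] using hsafe i
  have hright : ∀ i < ℓ, ∀ j ≤ i, r i ∉ X j := by
    intro i
    induction i with
    | zero => intro hℓ j hj; rw [Nat.le_zero.mp hj]; exact hshot 0 hℓ
    | succ i ih =>
      intro hiℓ j hj hrj
      obtain ⟨q, hqℓ, hiq, hi'q⟩ := hedge _ _ (hr i)
      have hq : i < q := by
        by_contra! hqi
        exact ih (by omega) q hqi hiq
      exact hshot (i + 1) hiℓ (hinterval _ j (i + 1) q hj hq hqℓ hrj hi'q)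
  obtain ⟨j, hjℓ, hj⟩ := hcover (r (ℓ - 1))
  exact hright (ℓ - 1) (by omega) j (by omega) hj

end PathDecomp

section Hunters

variable {V : Type*} {G : SimpleGraph V}

theorem HuntersWin.mono {j k : ℕ} (h : HuntersWin G j) (hjk : j ≤ k) : HuntersWin G k := by
  obtain ⟨Hs, hcard, hwin⟩ := h
  exact ⟨Hs, fun i => (hcard i).trans hjk, hwin⟩

theorem hunterNumber_eq_succ {k : ℕ} (hwin : HuntersWin G (k + 1)) (hlose : ¬ HuntersWin G k) :
    hunterNumber G = k + 1 :=
  (Nat.sInf_upward_closed_eq_succ_iff (fun _ _ hle h => HuntersWin.mono h hle) k).mpr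
    ⟨hwin, hlose⟩

variable (G) (Hs : ℕ → Finset V)

/-- `CanEvade G Hs i n v`: a rabbit standing at `v` just before shot `i` can avoid the shots
`Hs i, …, Hs (i + n)`. -/
def CanEvade : ℕ → ℕ → V → Prop
  | i, 0, v => v ∉ Hs i
  | i, n + 1, v => v ∉ Hs i ∧ ∃ u, G.Adj v u ∧ CanEvade (i + 1) n u

variable {G Hs}

theorem CanEvade.mono {i m n : ℕ} {v : V} (h : CanEvade G Hs i n v) (hmn : m ≤ n) :
    CanEvade G Hs i m v := by
  induction n generalizing i m v with
  | zero => rwa [Nat.le_zero.mp hmn]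
  | succ n ih =>
    obtain ⟨hv, u, hvu, hu⟩ := h
    cases m with
    | zero => exact hv
    | succ m => exact ⟨hv, u, hvu, ih hu (by omega)⟩

theorem exists_forall_of_forall_exists_antitone {α : Type*} [Finite α] {P : α → ℕ → Prop}
    (hP : ∀ a, Antitone (P a)) (h : ∀ n, ∃ a, P a n) : ∃ a, ∀ n, P a n := by
  by_contra! hno
  have hev : ∀ᶠ n in Filter.atTop, ∀ a, ¬ P a n := by
    rw [Filter.eventually_all]
    intro a
    obtain ⟨n, hn⟩ := hno a
    filter_upwards [Filter.eventually_ge_atTop n] with m hm hPm using hn (hP a hm hPm)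
  obtain ⟨n, hn⟩ := hev.exists
  obtain ⟨a, ha⟩ := h n
  exact hn a ha

/-- Kőnig's lemma for the hunting game on a finite graph. -/
theorem exists_rabbitStrategy_of_forall_canEvade [Finite V] {v : V}
    (hv : ∀ n, CanEvade G Hs 0 n v) : ∃ r, RabbitStrategy G r ∧ ∀ i, r i ∉ Hs i := by
  have hstep : ∀ i v, (∀ n, CanEvade G Hs i n v) →
      ∃ u, G.Adj v u ∧ ∀ n, CanEvade G Hs (i + 1) n u := fun i v h => by
      obtain ⟨u, hu⟩ := exists_forall_of_forall_exists_antitone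
        (fun _ _ _ hmn ⟨hvu, hu⟩ => ⟨hvu, hu.mono hmn⟩) fun n => (h (n + 1)).2
      exact ⟨u, (hu 0).1, fun n => (hu n).2⟩
  choose! next hadj hnext using hstep
  let r : ℕ → V := fun i => Nat.rec v next i
  have hr : ∀ i, ∀ n, CanEvade G Hs i n (r i) := fun i => by
    induction i with
    | zero => exact hv
    | succ i ih => exact hnext i (r i) ih
  exact ⟨r, fun i => hadj i (r i) (hr i), fun i => hr i 0⟩

variable [Fintype V] [DecidableEq V] [DecidableRel G.Adj]

variable (G Hs) in
/-- The vertices a rabbit may occupy just before shot `i`. -/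
def contaminated : ℕ → Finset V
  | 0 => univ
  | i + 1 => (contaminated i \ Hs i).biUnion fun v => G.neighborFinset v

theorem exists_canEvade_of_mem_contaminated {i m : ℕ} {v : V} (hv : v ∈ contaminated G Hs i)
    (hvm : CanEvade G Hs i m v) : ∃ w, CanEvade G Hs 0 (i + m) w := by
  induction i generalizing v m with
  | zero => exact ⟨v, by simpa using hvm⟩
  | succ i ih =>
    simp only [contaminated, mem_biUnion, mem_sdiff, SimpleGraph.mem_neighborFinset] at hv
    obtain ⟨u, ⟨hu, hu'⟩, huv⟩ := hv
    obtain ⟨w, hw⟩ := ih hu (m := m + 1) ⟨hu', v, huv, hvm⟩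
    exact ⟨w, by rwa [Nat.add_right_comm, Nat.add_assoc]⟩

theorem two_le_card_contaminated_sdiff {k : ℕ} (hV : k + 2 ≤ Fintype.card V)
    (hG : ∀ u v, u ≠ v → k + 2 ≤ (G.neighborFinset u ∪ G.neighborFinset v).card)
    (hHs : ∀ i, (Hs i).card ≤ k) (i : ℕ) : 2 ≤ (contaminated G Hs i \ Hs i).card := by
  have hsdiff : ∀ i, k + 2 ≤ (contaminated G Hs i).card →
      2 ≤ (contaminated G Hs i \ Hs i).card := fun i hi => by
      have := le_card_sdiff (Hs i) (contaminated G Hs i)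
      have := hHs i
      omega
  refine hsdiff i ?_
  induction i with
  | zero => simpa [contaminated] using hV
  | succ i ih =>
    obtain ⟨u, hu, v, hv, huv⟩ := one_lt_card.mp (hsdiff i ih)
    refine (hG u v huv).trans (card_le_card (union_subset ?_ ?_)) <;>
      exact subset_biUnion_of_mem (fun v => G.neighborFinset v) ‹_›

theorem not_huntersWin_of_card_neighborFinset_union {k : ℕ} (hV : k + 2 ≤ Fintype.card V)
    (hG : ∀ u v, u ≠ v → k + 2 ≤ (G.neighborFinset u ∪ G.neighborFinset v).card) :
    ¬ HuntersWin G k := by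
  rintro ⟨Hs, hHs, hwin⟩
  have hlong : ∀ n, ∃ w, CanEvade G Hs 0 n w := fun n => by
    obtain ⟨v, hv⟩ : (contaminated G Hs n \ Hs n).Nonempty := by
      rw [← card_pos]; have := two_le_card_contaminated_sdiff hV hG hHs n; omega
    rw [mem_sdiff] at hv
    exact exists_canEvade_of_mem_contaminated (m := 0) hv.1 hv.2
  obtain ⟨v, hv⟩ := exists_forall_of_forall_exists_antitone
    (P := fun w n => CanEvade G Hs 0 n w) (fun _ _ _ hmn h => h.mono hmn) hlong
  obtain ⟨r, hr, hsafe⟩ := exists_rabbitStrategy_of_forall_canEvade hv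
  obtain ⟨i, hi⟩ := hwin r hr trivial
  exact hsafe i hi

end Hunters

theorem Fin.le_card_of_forall_mem {n a m : ℕ} (hm : a + m ≤ n) {s : Finset (Fin n)}
    (hs : ∀ x : Fin n, a ≤ x → (x : ℕ) < a + m → x ∈ s) : m ≤ s.card := by
  calc m = ((Ico a (a + m)).attachFin fun _ hx => (mem_Ico.mp hx).2.trans_le hm).card := by simp
    _ ≤ s.card := card_le_card fun x hx => by
        rw [mem_attachFin, mem_Ico] at hx
        exact hs x hx.1 hx.2

def pathPow (n k : ℕ) : SimpleGraph (Fin n) where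
  Adj a b := a ≠ b ∧ (a : ℕ) ≤ b + k ∧ (b : ℕ) ≤ a + k
  symm := ⟨fun _ _ h => ⟨h.1.symm, h.2.2, h.2.1⟩⟩
  loopless := ⟨fun _ h => h.1 rfl⟩

instance (n k : ℕ) : DecidableRel (pathPow n k).Adj := fun a b =>
  inferInstanceAs (Decidable (a ≠ b ∧ (a : ℕ) ≤ b + k ∧ (b : ℕ) ≤ a + k))

namespace pathPow

variable {n k : ℕ}

@[simp]
theorem adj_iff {a b : Fin n} :
    (pathPow n k).Adj a b ↔ a ≠ b ∧ (a : ℕ) ≤ b + k ∧ (b : ℕ) ≤ a + k :=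
  Iff.rfl

def bag (n k i : ℕ) : Finset (Fin n) := univ.filter fun x => i ≤ x ∧ (x : ℕ) ≤ i + k

theorem mem_bag {i : ℕ} {x : Fin n} : x ∈ bag n k i ↔ i ≤ x ∧ (x : ℕ) ≤ i + k := by
  simp [bag]

theorem card_bag_le (i : ℕ) : (bag n k i).card ≤ k + 1 := by
  calc (bag n k i).card = ((bag n k i).map Fin.valEmbedding).card := (card_map _).symm
    _ ≤ (Icc i (i + k)).card := card_le_card fun x hx => by
        obtain ⟨y, hy, rfl⟩ := mem_map.mp hx
        simpa using mem_bag.mp hy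
    _ = k + 1 := by rw [Nat.card_Icc]; omega

theorem isPathDecomp_bag : IsPathDecomp (pathPow n k) n (bag n k) := by
  refine ⟨fun v => ⟨v, v.isLt, mem_bag.mpr (by omega)⟩,
    fun u v ⟨_, _, _⟩ => ⟨min u v, by omega, mem_bag.mpr (by omega), mem_bag.mpr (by omega)⟩,
    fun v i j l hij hjl _ hi hl => ?_⟩
  rw [mem_bag] at hi hl ⊢
  omega

theorem isNClique_initial (hkn : k < n) :
    (pathPow n k).IsNClique (k + 1) (univ.map (Fin.castLEEmb hkn)) := by
  refine ⟨fun a ha b hb hab => ?_, by simp⟩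
  simp only [coe_map, Set.mem_image, mem_coe, mem_univ, true_and] at ha hb
  obtain ⟨a, rfl⟩ := ha
  obtain ⟨b, rfl⟩ := hb
  refine ⟨hab, ?_, ?_⟩ <;> simp only [Fin.castLEEmb_apply, Fin.val_castLE] <;> omega

theorem pathwidth_eq (hkn : k < n) : pathwidth (pathPow n k) = k :=
  pathwidth_eq_of_isPathDecomp_of_isNClique isPathDecomp_bag (fun i _ => card_bag_le i)
    (isNClique_initial hkn)

theorem huntersWin : HuntersWin (pathPow n k) (k + 1) :=
  huntersWin_of_isPathDecomp isPathDecomp_bag fun i _ => card_bag_le i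

theorem card_neighborFinset_union (hk : 2 ≤ k) {u v : Fin (2 * k + 2)} (huv : u ≠ v) :
    k + 2 ≤ ((pathPow _ k).neighborFinset u ∪ (pathPow _ k).neighborFinset v).card := by
  wlog hlt : u < v generalizing u v
  · rw [union_comm]
    exact this huv.symm (lt_of_le_of_ne (not_lt.mp hlt) huv.symm)
  rw [Fin.lt_def] at hlt
  by_cases hclose : (v : ℕ) ≤ u + k
  · refine Fin.le_card_of_forall_mem (a := min u k) (by omega) fun x hx hx' => ?_
    simp only [mem_union, SimpleGraph.mem_neighborFinset, adj_iff, ne_eq, Fin.ext_iff]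
    omega
  · calc k + 2 ≤ (univ \ {u, v}).card := by
          rw [card_sdiff_of_subset (subset_univ _), card_univ, Fintype.card_fin, card_pair huv]
          omega
      _ ≤ _ := card_le_card fun x hx => by
          simp only [mem_sdiff, mem_univ, mem_insert, mem_singleton, true_and, not_or] at hx
          simp only [mem_union, SimpleGraph.mem_neighborFinset, adj_iff, ne_eq, Fin.ext_iff]
          have := Fin.val_ne_of_ne hx.1
          have := Fin.val_ne_of_ne hx.2
          omega

theorem hunterNumber_eq (hk : 2 ≤ k) : hunterNumber (pathPow (2 * k + 2) k) = k + 1 :=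
  hunterNumber_eq_succ huntersWin <|
    not_huntersWin_of_card_neighborFinset_union (by rw [Fintype.card_fin]; omega)
      fun _ _ => card_neighborFinset_union hk

end pathPow

/-- For every integer k ≥ 2 there exists a finite simple graph G with pathwidth exactly k
and hunter number h(G) = k + 1; that is, the bound h(G) ≤ pw(G) + 1 is tight for graphs of
pathwidth at least 2. -/
theorem pathwidth_bound_tight (k : ℕ) (hk : 2 ≤ k) :
    ∃ (V : Type) (_ : Fintype V) (G : SimpleGraph V),
      pathwidth G = k ∧ hunterNumber G = k + 1 :=
  ⟨Fin (2 * k + 2), inferInstance, pathPow (2 * k + 2) k, pathPow.pathwidth_eq (by omega),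
    pathPow.hunterNumber_eq hk⟩
end

section
/- There exists a constant C > 0 such that for every tree T on n ≥ 2 vertices, h(T) ≤ C · log n. -/
/-!
Every finite tree `C` has a centroid `v`: the components of `C - v` have at most `|C| / 2`
vertices. Take `v` minimising the largest component of `C - v`; if some component `D` were
larger, its vertex `u` adjacent to `v` would do better, because the edge `uv` splits `C` into
`D` and the component of `v` in `C - u`.

One hunter shooting the centroid in every round confines the rabbit to a single component of
`C - v`, where the other hunters recurse. Since the rabbit never leaves its component of a
forest, the components can be cleared one after another, each in bounded time. Hence
`⌊log₂ n⌋ + 1` hunters suffice on any forest with `n` vertices.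
-/

open Finset

namespace SimpleGraph

variable {V : Type*} {G : SimpleGraph V}

def ReachableIn (G : SimpleGraph V) (s : Set V) (x y : V) : Prop :=
  ∃ p : G.Walk x y, ∀ z ∈ p.support, z ∈ s

namespace ReachableIn

variable {s t : Set V} {u x y z : V}

lemma refl (hx : x ∈ s) : G.ReachableIn s x x :=
  ⟨.nil, by simpa using hx⟩

lemma left_mem (h : G.ReachableIn s x y) : x ∈ s :=
  let ⟨p, hp⟩ := h; hp x p.start_mem_support

lemma right_mem (h : G.ReachableIn s x y) : y ∈ s :=
  let ⟨p, hp⟩ := h; hp y p.end_mem_support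

lemma symm (h : G.ReachableIn s x y) : G.ReachableIn s y x :=
  let ⟨p, hp⟩ := h; ⟨p.reverse, by simpa using hp⟩

lemma trans (hxy : G.ReachableIn s x y) (hyz : G.ReachableIn s y z) : G.ReachableIn s x z := by
  obtain ⟨p, hp⟩ := hxy
  obtain ⟨q, hq⟩ := hyz
  refine ⟨p.append q, fun w hw => ?_⟩
  rcases (Walk.mem_support_append_iff p q).mp hw with hw | hw
  exacts [hp w hw, hq w hw]

lemma mono (h : G.ReachableIn s x y) (hst : s ⊆ t) : G.ReachableIn t x y :=
  let ⟨p, hp⟩ := h; ⟨p, fun w hw => hst (hp w hw)⟩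

lemma of_adj (h : G.Adj x y) (hx : x ∈ s) (hy : y ∈ s) : G.ReachableIn s x y :=
  ⟨h.toWalk, by simp [hx, hy]⟩

lemma exists_isPath (h : G.ReachableIn s x y) :
    ∃ p : G.Walk x y, p.IsPath ∧ ∀ z ∈ p.support, z ∈ s := by
  classical
  obtain ⟨p, hp⟩ := h
  exact ⟨p.bypass, p.bypass_isPath, fun z hz => hp z (p.support_bypass_subset_support hz)⟩

lemma exists_adj_reachableIn_diff (h : G.ReachableIn s x y) (hxy : x ≠ y) :
    ∃ u, G.Adj x u ∧ G.ReachableIn (s \ {x}) u y := by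
  obtain ⟨p, hp, hps⟩ := h.exists_isPath
  cases p with
  | nil => exact absurd rfl hxy
  | cons hxu q =>
    rw [Walk.cons_isPath_iff] at hp
    refine ⟨_, hxu, q, fun z hz => ⟨hps z (by simp [hz]), ?_⟩⟩
    rintro rfl
    exact hp.2 hz

/-- A path from `x` to `y` either avoids `u`, or its part before `u` avoids `y`. -/
lemma diff_singleton_or (h : G.ReachableIn s x y) (hyu : y ≠ u) :
    G.ReachableIn (s \ {u}) x y ∨ G.ReachableIn (s \ {y}) x u := by
  classical
  obtain ⟨p, hp, hps⟩ := h.exists_isPath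
  by_cases hu : u ∈ p.support
  · refine .inr ⟨p.takeUntil u hu, fun z hz =>
      ⟨hps z (p.support_takeUntil_subset_support hu hz), ?_⟩⟩
    rintro rfl
    exact Walk.endpoint_notMem_support_takeUntil hp hu hyu hz
  · refine .inl ⟨p, fun z hz => ⟨hps z hz, ?_⟩⟩
    rintro rfl
    exact hu hz

end ReachableIn

lemma IsAcyclic.not_reachableIn_of_adj (hG : G.IsAcyclic) {u v w : V} (huv : G.Adj u v)
    (hwv : G.ReachableIn {u}ᶜ w v) : ¬ G.ReachableIn {v}ᶜ w u := by
  intro hwu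
  obtain ⟨p, hp, hps⟩ := hwv.exists_isPath
  obtain ⟨q, hq, hqs⟩ := hwu.exists_isPath
  have hqv : (q.concat huv).IsPath :=
    (Walk.concat_isPath_iff huv).mpr ⟨hq, fun hv => hqs v hv rfl⟩
  have hpq : p = q.concat huv :=
    congrArg Subtype.val ((hG.subsingleton_path w v).elim ⟨p, hp⟩ ⟨_, hqv⟩)
  refine hps u ?_ rfl
  simp [hpq, Walk.support_concat]

open Classical in
noncomputable def componentIn (G : SimpleGraph V) (A : Finset V) (a : V) : Finset V :=
  {x ∈ A | G.ReachableIn A a x}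

variable {A C : Finset V} {a b u v w x y : V}

lemma mem_componentIn : x ∈ G.componentIn A a ↔ G.ReachableIn A a x := by
  simp only [componentIn, mem_filter, and_iff_right_iff_imp]
  exact fun h => h.right_mem

lemma componentIn_subset : G.componentIn A a ⊆ A :=
  fun _ hx => (mem_componentIn.mp hx).right_mem

lemma mem_componentIn_self (ha : a ∈ A) : a ∈ G.componentIn A a :=
  mem_componentIn.mpr (.refl ha)

lemma componentIn_eq (h : G.ReachableIn A a b) : G.componentIn A a = G.componentIn A b := by
  ext x
  simp only [mem_componentIn]
  exact ⟨h.symm.trans, h.trans⟩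

lemma reachableIn_componentIn (hx : x ∈ G.componentIn A a) (hy : y ∈ G.componentIn A a) :
    G.ReachableIn (G.componentIn A a) x y := by
  classical
  suffices h : ∀ x ∈ G.componentIn A a, G.ReachableIn (G.componentIn A a) a x from
    (h x hx).symm.trans (h y hy)
  intro x hx
  obtain ⟨p, hp⟩ := mem_componentIn.mp hx
  refine ⟨p, fun z hz => mem_componentIn.mpr ⟨p.takeUntil z hz, fun w hw => ?_⟩⟩
  exact hp w (p.support_takeUntil_subset_support hz hw)

variable [DecidableEq V]

lemma IsAcyclic.disjoint_componentIn_erase (hG : G.IsAcyclic) (huv : G.Adj u v) :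
    Disjoint (G.componentIn (C.erase u) v) (G.componentIn (C.erase v) u) := by
  refine Finset.disjoint_left.mpr fun w hwv hwu => ?_
  exact hG.not_reachableIn_of_adj huv ((mem_componentIn.mp hwv).symm.mono (by simp))
    ((mem_componentIn.mp hwu).symm.mono (by simp))

lemma mem_componentIn_erase_or (hC : ∀ x ∈ C, ∀ y ∈ C, G.ReachableIn C x y) (hv : v ∈ C)
    (hw : w ∈ C) (huv : u ≠ v) :
    w ∈ G.componentIn (C.erase u) v ∨ w ∈ G.componentIn (C.erase v) u := by
  simp only [mem_componentIn, coe_erase]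
  exact ((hC w hw v hv).diff_singleton_or huv.symm).imp ReachableIn.symm ReachableIn.symm

lemma IsAcyclic.card_componentIn_erase_lt (hG : G.IsAcyclic)
    (hC : ∀ x ∈ C, ∀ y ∈ C, G.ReachableIn C x y) (hv : v ∈ C) (hu : u ∈ C)
    (huv : G.Adj u v)
    (hheavy : #C < 2 * #(G.componentIn (C.erase v) u)) (c : V) :
    #(G.componentIn (C.erase u) c) < #(G.componentIn (C.erase v) u) := by
  set D := G.componentIn (C.erase v) u
  by_cases hvE : v ∈ G.componentIn (C.erase u) c
  · have hPD : #(G.componentIn (C.erase u) v) + #D ≤ #C := by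
      rw [← card_union_of_disjoint (hG.disjoint_componentIn_erase huv)]
      exact card_le_card (union_subset (componentIn_subset.trans (erase_subset _ _))
        (componentIn_subset.trans (erase_subset _ _)))
    rw [componentIn_eq (mem_componentIn.mp hvE)]
    omega
  · have hED : G.componentIn (C.erase u) c ⊆ D.erase u := by
      intro w hw
      have hwC : w ∈ C.erase u := componentIn_subset hw
      refine mem_erase.mpr ⟨ne_of_mem_erase hwC, ?_⟩
      refine (mem_componentIn_erase_or hC hv (mem_of_mem_erase hwC) huv.ne).resolve_left
        fun hwP => hvE ?_
      exact mem_componentIn.mpr ((mem_componentIn.mp hw).trans (mem_componentIn.mp hwP).symm)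
    exact (card_le_card hED).trans_lt
      (card_erase_lt_of_mem (mem_componentIn_self (mem_erase.mpr ⟨huv.ne, hu⟩)))

lemma IsAcyclic.exists_centroid (hG : G.IsAcyclic) (hne : C.Nonempty)
    (hC : ∀ x ∈ C, ∀ y ∈ C, G.ReachableIn C x y) :
    ∃ v ∈ C, ∀ b ∈ C.erase v, 2 * #(G.componentIn (C.erase v) b) ≤ #C := by
  obtain ⟨v, hv, hmin⟩ := exists_min_image C
    (fun x => C.sup fun b => #(G.componentIn (C.erase x) b)) hne
  refine ⟨v, hv, fun b hb => ?_⟩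
  by_contra! hheavy
  obtain ⟨u, hvu, hub⟩ :=
    (hC v hv b (mem_of_mem_erase hb)).exists_adj_reachableIn_diff (ne_of_mem_erase hb).symm
  rw [← coe_erase] at hub
  have hu : u ∈ C := mem_of_mem_erase hub.left_mem
  rw [← componentIn_eq hub] at hheavy
  have hlt : (C.sup fun c => #(G.componentIn (C.erase u) c)) < #(G.componentIn (C.erase v) u) :=
    (Finset.sup_lt_iff (by rw [Nat.bot_eq_zero]; omega)).mpr fun c _ =>
      hG.card_componentIn_erase_lt hC hv hu hvu.symm hheavy c
  have hle : #(G.componentIn (C.erase v) u) ≤ C.sup fun c => #(G.componentIn (C.erase v) c) :=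
    le_sup (f := fun c => #(G.componentIn (C.erase v) c)) hu
  exact absurd (hmin u hu) (by omega)

end SimpleGraph

open SimpleGraph

variable {V : Type*} {G : SimpleGraph V} {k N N₁ N₂ : ℕ} {𝒜 ℬ : Set (Finset V)}

/-- The time bound `N` is what allows strategies to be run one after another. -/
def HuntersCatch (G : SimpleGraph V) (k N : ℕ) (𝒜 : Set (Finset V)) : Prop :=
  ∃ Hs : ℕ → Finset V, (∀ i, #(Hs i) ≤ k) ∧
    ∀ r, RabbitStrategy G r → ∀ A ∈ 𝒜, (∀ i < N, r i ∈ A) → ∃ i < N, r i ∈ Hs i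

lemma RabbitStrategy.reachableIn {r : ℕ → V} {s : Set V} (hr : RabbitStrategy G r) {n : ℕ}
    (hs : ∀ i ≤ n, r i ∈ s) : G.ReachableIn s (r 0) (r n) := by
  induction n with
  | zero => exact .refl (hs 0 le_rfl)
  | succ n ih =>
    exact (ih fun i hi => hs i (by omega)).trans
      (.of_adj (hr n) (hs n (by omega)) (hs (n + 1) le_rfl))

lemma HuntersCatch.union (h₁ : HuntersCatch G k N₁ 𝒜) (h₂ : HuntersCatch G k N₂ ℬ) :
    HuntersCatch G k (N₁ + N₂) (𝒜 ∪ ℬ) := by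
  obtain ⟨H₁, hH₁, hcatch₁⟩ := h₁
  obtain ⟨H₂, hH₂, hcatch₂⟩ := h₂
  refine ⟨fun i => if i < N₁ then H₁ i else H₂ (i - N₁), fun i => ?_, ?_⟩
  · dsimp only
    split_ifs
    exacts [hH₁ i, hH₂ _]
  rintro r hr A (hA | hA) hrA
  · obtain ⟨i, hi, hri⟩ := hcatch₁ r hr A hA fun i hi => hrA i (by omega)
    exact ⟨i, by omega, by simpa [hi] using hri⟩
  · obtain ⟨i, hi, hri⟩ := hcatch₂ (fun i => r (N₁ + i)) (fun i => hr (N₁ + i)) A hA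
      fun i hi => hrA (N₁ + i) (by omega)
    exact ⟨N₁ + i, by omega, by simpa using hri⟩

lemma exists_huntersCatch_biUnion {ι : Type*} (s : Finset ι) (𝒜 : ι → Set (Finset V))
    (h : ∀ a ∈ s, ∃ N, HuntersCatch G k N (𝒜 a)) :
    ∃ N, HuntersCatch G k N (⋃ a ∈ s, 𝒜 a) := by
  classical
  induction s using Finset.induction_on with
  | empty => exact ⟨0, fun _ => ∅, by simp, by simp⟩
  | insert a s ha ih =>
    obtain ⟨N₁, h₁⟩ := h a (mem_insert_self a s)
    obtain ⟨N₂, h₂⟩ := ih fun b hb => h b (mem_insert_of_mem hb)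
    exact ⟨N₁ + N₂, by simpa [set_biUnion_insert] using h₁.union h₂⟩

lemma exists_huntersCatch_of_componentIn {A : Finset V}
    (h : ∀ a ∈ A, ∃ N, HuntersCatch G k N {G.componentIn A a}) :
    ∃ N, HuntersCatch G k N {A} := by
  obtain ⟨N, Hs, hHs, hcatch⟩ := exists_huntersCatch_biUnion A _ h
  refine ⟨N + 1, Hs, hHs, fun r hr B hB hrB => ?_⟩
  rw [Set.mem_singleton_iff] at hB
  subst hB
  have hrK : ∀ i < N, r i ∈ G.componentIn B (r 0) := fun i _ =>
    mem_componentIn.mpr (hr.reachableIn fun j _ => hrB j (by omega))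
  have hK : G.componentIn B (r 0) ∈ ⋃ a ∈ B, {G.componentIn B a} :=
    Set.mem_biUnion (hrB 0 (by omega)) rfl
  obtain ⟨i, hi, hri⟩ := hcatch r hr _ hK hrK
  exact ⟨i, by omega, hri⟩

lemma HuntersCatch.of_erase [DecidableEq V] {A : Finset V} {v : V}
    (h : HuntersCatch G k N {A.erase v}) : HuntersCatch G (k + 1) N {A} := by
  obtain ⟨Hs, hHs, hcatch⟩ := h
  refine ⟨fun i => insert v (Hs i), fun i => (card_insert_le _ _).trans (by simpa using hHs i),
    ?_⟩
  rintro r hr _ rfl hrA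
  by_cases hv : ∃ i < N, r i = v
  · obtain ⟨i, hi, rfl⟩ := hv
    exact ⟨i, hi, mem_insert_self _ _⟩
  · push Not at hv
    obtain ⟨i, hi, hri⟩ := hcatch r hr _ rfl fun i hi => mem_erase.mpr ⟨hv i hi, hrA i hi⟩
    exact ⟨i, hi, mem_insert_of_mem hri⟩

theorem SimpleGraph.IsAcyclic.exists_huntersCatch_of_card_componentIn_lt [DecidableEq V]
    (hG : G.IsAcyclic) :
    ∀ (j : ℕ) (A : Finset V), (∀ a ∈ A, #(G.componentIn A a) < 2 ^ j) →
      ∃ N, HuntersCatch G j N {A}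
  | 0, A, hA => exists_huntersCatch_of_componentIn fun a ha =>
      absurd (hA a ha) (not_lt.mpr (card_pos.mpr ⟨a, mem_componentIn_self ha⟩))
  | j + 1, A, hA => exists_huntersCatch_of_componentIn fun a ha => by
      obtain ⟨v, hv, hhalf⟩ := hG.exists_centroid ⟨a, mem_componentIn_self ha⟩
        fun x hx y hy => reachableIn_componentIn hx hy
      obtain ⟨N, hN⟩ := hG.exists_huntersCatch_of_card_componentIn_lt j
          ((G.componentIn A a).erase v) fun b hb => by
        have hb_half := hhalf b hb
        have ha_lt := hA a ha
        rw [pow_succ] at ha_lt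
        omega
      exact ⟨N, hN.of_erase⟩

theorem SimpleGraph.IsAcyclic.huntersWin [Fintype V] (hG : G.IsAcyclic) :
    HuntersWin G (Nat.log 2 (Fintype.card V) + 1) := by
  classical
  obtain ⟨N, Hs, hHs, hcatch⟩ := hG.exists_huntersCatch_of_card_componentIn_lt _ univ
    fun a _ => (card_le_univ _).trans_lt (Nat.lt_pow_succ_log_self one_lt_two _)
  exact ⟨Hs, hHs, fun r hr _ => (hcatch r hr univ rfl fun i _ => mem_univ _).imp fun i h => h.2⟩

lemma natLog_two_add_one_le {n : ℕ} (hn : 2 ≤ n) :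
    (Nat.log 2 n + 1 : ℝ) ≤ 2 / Real.log 2 * Real.log n := by
  have hn' : (2 : ℝ) ≤ n := by exact_mod_cast hn
  have hone : 1 ≤ Real.logb 2 n :=
    (Real.le_logb_iff_rpow_le one_lt_two (by positivity)).mpr (by simpa using hn')
  have hlog : (Nat.log 2 n : ℝ) ≤ Real.logb 2 n := Real.natLog_le_logb n 2
  calc (Nat.log 2 n + 1 : ℝ) ≤ 2 * Real.logb 2 n := by linarith
    _ = 2 / Real.log 2 * Real.log n := by rw [Real.logb]; ring

/-- There exists a constant C > 0 such that for every tree T on n ≥ 2 vertices,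
h(T) ≤ C · log n. -/
theorem tree_hunterNumber_upper :
    ∃ C : ℝ, 0 < C ∧
      ∀ (V : Type) [Fintype V] (G : SimpleGraph V), G.Connected → G.IsAcyclic →
        2 ≤ Fintype.card V →
        (hunterNumber G : ℝ) ≤ C * Real.log (Fintype.card V) := by
  refine ⟨2 / Real.log 2, by positivity, fun V _ G _ hG hcard => ?_⟩
  calc (hunterNumber G : ℝ) ≤ Nat.log 2 (Fintype.card V) + 1 := by
        exact_mod_cast Nat.sInf_le hG.huntersWin
    _ ≤ _ := natLog_two_add_one_le hcard
end
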